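/- arXiv:2005.06511 — 11 statements merged into one kernel-verified Lean document; each statement's English description precedes it below -/
import Mathlib

section
/- Let X = (X_1,…,X_n) be an α-EFX allocation for some α ∈ (0,1]. For all agents i and j, if the bundle X_j contains at least two goods, then v_i(X_i) ≥ (α/2) · v_i(X_j). -/
/-- In an `α`-EFX allocation, if bundle `X j` has at least two
goods, then `v i (X i) ≥ (α/2) · v i (X j)`. -/
theorem alphaEFX_half_bound_on_large_bundles
    {G : Type*} [DecidableEq G]
    (n : ℕ) (hn : 0 < n) (M : Finset G)
    (v : Fin n → Finset G → ℝ)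
    (hv0 : ∀ i A, 0 ≤ v i A)
    (hnorm : ∀ i, v i ∅ = 0)
    (hmono : ∀ i A B, A ⊆ B → v i A ≤ v i B)
    (hsub : ∀ i A B, v i (A ∪ B) ≤ v i A + v i B)
    (α : ℝ) (hα0 : 0 < α) (hα1 : α ≤ 1)
    (X : Fin n → Finset G)
    (hXM : ∀ i, X i ⊆ M)
    (hdisj : ∀ i j, i ≠ j → Disjoint (X i) (X j))
    (hEFX : ∀ i j, ∀ g ∈ X j, α * v i (X j \ {g}) ≤ v i (X i)) :
    ∀ i j, 2 ≤ (X j).card → (α / 2) * v i (X j) ≤ v i (X i) := by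
  intro i j hcard
  obtain ⟨g, hg, g', hg', hne⟩ := Finset.one_lt_card.mp hcard
  have h1 := hEFX i j g hg
  have h2 := hEFX i j g' hg'
  have hcover : X j ⊆ (X j \ {g}) ∪ (X j \ {g'}) := by
    intro x hx
    rcases eq_or_ne x g with rfl | hx'
    · exact Finset.mem_union_right _ (Finset.mem_sdiff.mpr ⟨hx, by simpa using hne⟩)
    · exact Finset.mem_union_left _ (Finset.mem_sdiff.mpr ⟨hx, by simpa using hx'⟩)
  have hv : v i (X j) ≤ v i (X j \ {g}) + v i (X j \ {g'}) :=
    le_trans (hmono i _ _ hcover) (hsub i _ _)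
  nlinarith [hv0 i (X i), hv0 i (X j)]
end

section
/- Let X = (X_1,…,X_n) be a complete (1/2)-EFX allocation, and let S = ∪ { X_j : |X_j| = 1 } be the set of goods lying in singleton bundles of X. Then for every agent i, v_i(X_i) ≥ (1/(4n)) · v_i(M \ S). -/
lemma sub_biUnion_bound {G : Type*} [DecidableEq G] {n : ℕ}
    (v : Finset G → ℝ) (hnorm : v ∅ = 0)
    (hsub : ∀ A B, v (A ∪ B) ≤ v A + v B)
    (X : Fin n → Finset G) (s : Finset (Fin n)) :
    v (s.biUnion X) ≤ ∑ j ∈ s, v (X j) := by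
  induction s using Finset.cons_induction with
  | empty => simp [hnorm]
  | cons a s ha ih =>
    rw [Finset.cons_eq_insert, Finset.biUnion_insert, Finset.sum_insert ha]
    exact le_trans (hsub _ _) (by linarith)

/-- In a complete `1/2`-EFX allocation, letting `S` be the union
of the singleton bundles, every agent `i` satisfies
`v i (X i) ≥ (1/(4n)) · v i (M \ S)`. -/
theorem half_EFX_value_bound_off_singletons
    {G : Type*} [DecidableEq G]
    (n : ℕ) (hn : 0 < n) (M : Finset G)
    (v : Fin n → Finset G → ℝ)
    (hv0 : ∀ i A, 0 ≤ v i A)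
    (hnorm : ∀ i, v i ∅ = 0)
    (hmono : ∀ i A B, A ⊆ B → v i A ≤ v i B)
    (hsub : ∀ i A B, v i (A ∪ B) ≤ v i A + v i B)
    (X : Fin n → Finset G)
    (hXM : ∀ i, X i ⊆ M)
    (hdisj : ∀ i j, i ≠ j → Disjoint (X i) (X j))
    (hcomplete : Finset.univ.biUnion X = M)
    (hEFX : ∀ i j, ∀ g ∈ X j, (1 / 2 : ℝ) * v i (X j \ {g}) ≤ v i (X i)) :
    ∀ i, (1 / (4 * (n : ℝ))) *
        v i (M \ (Finset.univ.filter (fun j => (X j).card = 1)).biUnion X)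
      ≤ v i (X i) := by
  intro i
  set S := (Finset.univ.filter (fun j => (X j).card = 1)).biUnion X with hS
  set T := Finset.univ.filter (fun j => (X j).card ≠ 1) with hT
  -- M \ S ⊆ T.biUnion X
  have hsubset : M \ S ⊆ T.biUnion X := by
    intro g hg
    rw [Finset.mem_sdiff] at hg
    obtain ⟨hgM, hgS⟩ := hg
    rw [← hcomplete] at hgM
    obtain ⟨j, _, hjg⟩ := Finset.mem_biUnion.mp hgM
    refine Finset.mem_biUnion.mpr ⟨j, ?_, hjg⟩
    rw [hT, Finset.mem_filter]
    refine ⟨Finset.mem_univ _, fun hc => hgS ?_⟩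
    exact Finset.mem_biUnion.mpr ⟨j, Finset.mem_filter.mpr ⟨Finset.mem_univ _, hc⟩, hjg⟩
  -- per-bundle bound
  have hbundle : ∀ j ∈ T, v i (X j) ≤ 4 * v i (X i) := by
    intro j hj
    rw [hT, Finset.mem_filter] at hj
    rcases Nat.lt_or_ge (X j).card 1 with hlt | hge
    · have : X j = ∅ := Finset.card_eq_zero.mp (by omega)
      rw [this, hnorm]
      have := hv0 i (X i); linarith
    · have h2 : 1 < (X j).card := lt_of_le_of_ne hge (Ne.symm hj.2)
      obtain ⟨g, hg, h, hh, hgh⟩ := Finset.one_lt_card.mp h2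
      have hcov : X j ⊆ (X j \ {g}) ∪ {g} := by
        intro x hx
        by_cases hxg : x = g
        · simp [hxg]
        · exact Finset.mem_union_left _ (Finset.mem_sdiff.mpr ⟨hx, by simp [hxg]⟩)
      have h1 : v i (X j) ≤ v i (X j \ {g}) + v i {g} :=
        le_trans (hmono i _ _ hcov) (hsub i _ _)
      have h2' : v i (X j \ {g}) ≤ 2 * v i (X i) := by
        have := hEFX i j g hg; linarith
      have h3 : v i {g} ≤ 2 * v i (X i) := by
        have hsub' : ({g} : Finset G) ⊆ X j \ {h} := by
          intro x hx
          rw [Finset.mem_singleton] at hx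
          subst hx
          exact Finset.mem_sdiff.mpr ⟨hg, by simp [hgh]⟩
        have := hmono i _ _ hsub'
        have := hEFX i j h hh
        linarith
      linarith
  have hsum : ∑ j ∈ T, v i (X j) ≤ (n : ℝ) * (4 * v i (X i)) := by
    calc ∑ j ∈ T, v i (X j) ≤ ∑ _j ∈ T, 4 * v i (X i) := Finset.sum_le_sum hbundle
    _ = (T.card : ℝ) * (4 * v i (X i)) := by rw [Finset.sum_const, nsmul_eq_mul]
    _ ≤ (n : ℝ) * (4 * v i (X i)) := by
        apply mul_le_mul_of_nonneg_right _ (by have := hv0 i (X i); linarith)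
        exact_mod_cast le_trans (Finset.card_le_card (Finset.filter_subset _ _))
          (le_of_eq (Finset.card_univ.trans (Fintype.card_fin n)))
  have hchain : v i (M \ S) ≤ 4 * (n : ℝ) * v i (X i) := by
    have := hmono i _ _ hsubset
    have := sub_biUnion_bound (v i) (hnorm i) (hsub i) X T
    linarith
  have hpos : (0 : ℝ) < 4 * (n : ℝ) := by positivity
  rw [div_mul_eq_mul_div, one_mul, div_le_iff₀ hpos]
  calc v i (M \ S) ≤ 4 * (n : ℝ) * v i (X i) := hchain
  _ = v i (X i) * (4 * (n : ℝ)) := by ring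
end

section
/- Let Z = (Z_1,…,Z_n) be a (possibly partial) α-EFX allocation with charity P = M \ (Z_1 ∪ … ∪ Z_n), such that v_i(Z_i) ≥ v_i(P) for every agent i. Let 𝐘 ⊆ M be a set of goods such that every singleton bundle of Z is contained in 𝐘 (i.e., |Z_j| = 1 implies Z_j ⊆ 𝐘). Then for every agent i, v_i(Z_i) ≥ (α/(2(n+1))) · v_i(M \ 𝐘). -/
/-!
Every good outside `Y` lies either in the charity or in a bundle `Z j \ Y`, and by subadditivity
`v i (M \ Y) ≤ v i P + ∑ j, v i (Z j \ Y)`. The charity term is at most `v i (Z i)`. A bundle with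
at most one good contributes nothing, since singletons lie in `Y`; a bundle with two distinct goods
`g ≠ g'` satisfies `v i (Z j) ≤ v i (Z j \ {g}) + v i (Z j \ {g'}) ≤ 2 v i (Z i) / α` by α-EFX.
Summing over the `n` bundles and using `α ≤ 1` gives `α v i (M \ Y) ≤ 2 (n + 1) v i (Z i)`.
-/

structure IsSubadditiveValuation {G : Type*} [DecidableEq G] (v : Finset G → ℝ) : Prop where
  map_empty : v ∅ = 0
  mono : Monotone v
  union_le : ∀ A B, v (A ∪ B) ≤ v A + v B

namespace IsSubadditiveValuation

variable {G : Type*} [DecidableEq G] {v : Finset G → ℝ}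

theorem nonneg (hv : IsSubadditiveValuation v) (A : Finset G) : 0 ≤ v A :=
  hv.map_empty ▸ hv.mono (Finset.empty_subset A)

theorem biUnion_le_sum (hv : IsSubadditiveValuation v) {ι : Type*} (s : Finset ι)
    (Z : ι → Finset G) : v (s.biUnion Z) ≤ ∑ j ∈ s, v (Z j) :=
  s.sup_eq_biUnion Z ▸ s.apply_sup_le_sum hv.map_empty (hv.union_le _ _)

theorem le_add_of_ne (hv : IsSubadditiveValuation v) {A : Finset G} {g g' : G}
    (hg : g ∈ A) (hne : g ≠ g') : v A ≤ v (A \ {g}) + v (A \ {g'}) :=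
  calc v A = v (A \ {g} ∪ {g}) := by rw [Finset.sdiff_union_of_subset (by simpa using hg)]
    _ ≤ v (A \ {g}) + v {g} := hv.union_le _ _
    _ ≤ v (A \ {g}) + v (A \ {g'}) := by
      gcongr
      exact hv.mono (by simpa using ⟨hg, hne⟩)

theorem sdiff_le_charity_add_sum (hv : IsSubadditiveValuation v) {ι : Type*} (s : Finset ι)
    (M Y : Finset G) (Z : ι → Finset G) :
    v (M \ Y) ≤ v (M \ s.biUnion Z) + ∑ j ∈ s, v (Z j \ Y) := by
  have hcover : M \ Y ⊆ (M \ s.biUnion Z) ∪ s.biUnion (fun j => Z j \ Y) := by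
    intro g hg
    simp only [Finset.mem_union, Finset.mem_sdiff, Finset.mem_biUnion] at hg ⊢
    by_cases hZ : ∃ j ∈ s, g ∈ Z j
    · obtain ⟨j, hj, hgj⟩ := hZ
      exact Or.inr ⟨j, hj, hgj, hg.2⟩
    · exact Or.inl ⟨hg.1, hZ⟩
  calc v (M \ Y) ≤ v ((M \ s.biUnion Z) ∪ s.biUnion (fun j => Z j \ Y)) := hv.mono hcover
    _ ≤ v (M \ s.biUnion Z) + v (s.biUnion (fun j => Z j \ Y)) := hv.union_le _ _
    _ ≤ v (M \ s.biUnion Z) + ∑ j ∈ s, v (Z j \ Y) := by gcongr; exact hv.biUnion_le_sum s _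

theorem mul_sdiff_le_two_mul (hv : IsSubadditiveValuation v) {A Y : Finset G} {α c : ℝ}
    (hα : 0 ≤ α) (hc : 0 ≤ c) (hEFX : ∀ g ∈ A, α * v (A \ {g}) ≤ c)
    (hsingle : A.card = 1 → A ⊆ Y) : α * v (A \ Y) ≤ 2 * c := by
  rcases lt_or_ge A.card 2 with hcard | hcard
  · have hempty : A \ Y = ∅ := by
      obtain hA | hA : A.card = 0 ∨ A.card = 1 := by omega
      · simp [Finset.card_eq_zero.mp hA]
      · exact Finset.sdiff_eq_empty_iff_subset.mpr (hsingle hA)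
    rw [hempty, hv.map_empty, mul_zero]
    positivity
  · obtain ⟨g, hg, g', hg', hne⟩ := Finset.one_lt_card.mp hcard
    calc α * v (A \ Y) ≤ α * v A := by gcongr; exact hv.mono Finset.sdiff_subset
      _ ≤ α * (v (A \ {g}) + v (A \ {g'})) := by gcongr; exact hv.le_add_of_ne hg hne
      _ ≤ 2 * c := by linarith [hEFX g hg, hEFX g' hg']

end IsSubadditiveValuation

theorem value_bound_off_Y_general
    {G : Type*} [DecidableEq G]
    (n : ℕ) (M : Finset G)
    (v : Fin n → Finset G → ℝ)
    (hnorm : ∀ i, v i ∅ = 0)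
    (hmono : ∀ i A B, A ⊆ B → v i A ≤ v i B)
    (hsub : ∀ i A B, v i (A ∪ B) ≤ v i A + v i B)
    (α : ℝ) (hα0 : 0 < α) (hα1 : α ≤ 1)
    (Z : Fin n → Finset G)
    (hEFX : ∀ i j, ∀ g ∈ Z j, α * v i (Z j \ {g}) ≤ v i (Z i))
    (hcharity : ∀ i, v i (M \ Finset.univ.biUnion Z) ≤ v i (Z i))
    (YY : Finset G)
    (hsingle : ∀ j, (Z j).card = 1 → Z j ⊆ YY) :
    ∀ i, (α / (2 * ((n : ℝ) + 1))) * v i (M \ YY) ≤ v i (Z i) := by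
  intro i
  have hv : IsSubadditiveValuation (v i) := ⟨hnorm i, fun A B => hmono i A B, hsub i⟩
  have hZi := hv.nonneg (Z i)
  have hbundle : ∀ j, α * v i (Z j \ YY) ≤ 2 * v i (Z i) := fun j =>
    hv.mul_sdiff_le_two_mul hα0.le hZi (hEFX i j) (hsingle j)
  have hsum : ∑ j, α * v i (Z j \ YY) ≤ n * (2 * v i (Z i)) := by
    simpa using Finset.sum_le_sum fun j (_ : j ∈ Finset.univ) => hbundle j
  have hcover : α * v i (M \ YY) ≤ α * v i (Z i) + ∑ j, α * v i (Z j \ YY) := by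
    rw [← Finset.mul_sum, ← mul_add]
    gcongr
    exact (hv.sdiff_le_charity_add_sum _ M YY Z).trans (by gcongr; exact hcharity i)
  rw [div_mul_eq_mul_div, div_le_iff₀ (by positivity)]
  linarith [mul_le_mul_of_nonneg_right hα1 hZi]

/-- For a (possibly partial) `α`-EFX allocation `Z` with charity
`P = M \ (Z₁ ∪ … ∪ Zₙ)` satisfying `v i (Z i) ≥ v i P`, if every singleton
bundle of `Z` is contained in `𝐘`, then
`v i (Z i) ≥ (α/(2(n+1))) · v i (M \ 𝐘)` for every agent `i`. -/
theorem value_bound_off_Y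
    {G : Type*} [DecidableEq G]
    (n : ℕ) (hn : 0 < n) (M : Finset G)
    (v : Fin n → Finset G → ℝ)
    (hv0 : ∀ i A, 0 ≤ v i A)
    (hnorm : ∀ i, v i ∅ = 0)
    (hmono : ∀ i A B, A ⊆ B → v i A ≤ v i B)
    (hsub : ∀ i A B, v i (A ∪ B) ≤ v i A + v i B)
    (α : ℝ) (hα0 : 0 < α) (hα1 : α ≤ 1)
    (Z : Fin n → Finset G)
    (hZM : ∀ i, Z i ⊆ M)
    (hdisj : ∀ i j, i ≠ j → Disjoint (Z i) (Z j))
    (hEFX : ∀ i j, ∀ g ∈ Z j, α * v i (Z j \ {g}) ≤ v i (Z i))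
    (hcharity : ∀ i, v i (M \ Finset.univ.biUnion Z) ≤ v i (Z i))
    (YY : Finset G) (hYM : YY ⊆ M)
    (hsingle : ∀ j, (Z j).card = 1 → Z j ⊆ YY) :
    ∀ i, (α / (2 * ((n : ℝ) + 1))) * v i (M \ YY) ≤ v i (Z i) :=
  value_bound_off_Y_general n M v hnorm hmono hsub α hα0 hα1 Z hEFX hcharity YY hsingle
end

section
/- Fix α ∈ (0,1] and an agent i. Suppose: (a) v_i({Y(i)}) ≥ v_i({g}) for every good g ∈ 𝐘 \ H_i; (b) v_i(Z_i) ≥ v_i({Y(i)}); and (c) v_i(Z_i) ≥ (α/(2(n+1))) · v_i(M \ 𝐘). Then v_i(Z_i) ≥ (α/(4(n+1))) · ( n · v_i({Y(i)}) + v_i(M \ H_i) ). -/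
/-- Lemma: lower bound on the final valuation: Fix `α ∈ (0,1]`
and an agent `i`. If (a) `v i {Y i} ≥ v i {g}` for every `g ∈ 𝐘 \ H i`,
(b) `v i (Z i) ≥ v i {Y i}`, and (c) `v i (Z i) ≥ (α/(2(n+1))) · v i (M \ 𝐘)`,
then `v i (Z i) ≥ (α/(4(n+1))) · (n · v i {Y i} + v i (M \ H i))`. -/
theorem lower_bound_final_valuation
    {G : Type*} [DecidableEq G]
    (n : ℕ) (hn : 0 < n) (M : Finset G) (hm : n ≤ M.card)
    (v : Fin n → Finset G → ℝ)
    (hv0 : ∀ i A, 0 ≤ v i A)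
    (hnorm : ∀ i, v i ∅ = 0)
    (hmono : ∀ i A B, A ⊆ B → v i A ≤ v i B)
    (hsub : ∀ i A B, v i (A ∪ B) ≤ v i A + v i B)
    (α : ℝ) (hα0 : 0 < α) (hα1 : α ≤ 1)
    (H : Fin n → Finset G)
    (hHM : ∀ i, H i ⊆ M) (hHcard : ∀ i, (H i).card = n)
    (hHtop : ∀ i, ∀ g ∈ H i, ∀ g' ∈ M \ H i, v i {g'} ≤ v i {g})
    (Y : Fin n → G) (hYM : ∀ i, Y i ∈ M) (hYinj : Function.Injective Y)
    (Z : Fin n → Finset G)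
    (hZM : ∀ i, Z i ⊆ M)
    (hdisj : ∀ i j, i ≠ j → Disjoint (Z i) (Z j))
    (i : Fin n)
    (ha : ∀ g ∈ Finset.univ.image Y \ H i, v i {g} ≤ v i {Y i})
    (hb : v i {Y i} ≤ v i (Z i))
    (hc : (α / (2 * ((n : ℝ) + 1))) * v i (M \ Finset.univ.image Y) ≤ v i (Z i)) :
    (α / (4 * ((n : ℝ) + 1))) * ((n : ℝ) * v i {Y i} + v i (M \ H i))
      ≤ v i (Z i) := by

  set YS := Finset.univ.image Y with hYSdef
  have hYcard : YS.card = n := by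
    rw [hYSdef, Finset.card_image_of_injective _ hYinj, Finset.card_univ, Fintype.card_fin]
  have hYi0 : 0 ≤ v i {Y i} := hv0 i _
  have key : ∀ S : Finset G, (∀ g ∈ S, v i {g} ≤ v i {Y i}) →
      v i S ≤ S.card * v i {Y i} := by
    intro S
    induction S using Finset.induction with
    | empty => intro _; simp [hnorm]
    | @insert a s hx ih =>
      intro h
      have h0 : v i (insert a s) ≤ v i {a} + v i s := by
        rw [Finset.insert_eq]; exact hsub i {a} s
      have h1 := h a (Finset.mem_insert_self a s)
      have h2 := ih (fun g hg => h g (Finset.mem_insert_of_mem hg))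
      rw [Finset.card_insert_of_notMem hx]
      push_cast
      linarith
  have hstep : v i (YS \ H i) ≤ (n : ℝ) * v i {Y i} := by
    have hk := key (YS \ H i) ha
    have hcardle : (((YS \ H i).card : ℝ)) ≤ (n : ℝ) := by
      have := Finset.card_le_card (Finset.sdiff_subset : YS \ H i ⊆ YS)
      exact_mod_cast this.trans_eq hYcard
    nlinarith
  have hsubset : M \ H i ⊆ (M \ YS) ∪ (YS \ H i) := by
    intro g hg
    simp only [Finset.mem_sdiff, Finset.mem_union] at *
    by_cases hgY : g ∈ YS
    · exact Or.inr ⟨hgY, hg.2⟩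
    · exact Or.inl ⟨hg.1, hgY⟩
  have hMH : v i (M \ H i) ≤ v i (M \ YS) + (n : ℝ) * v i {Y i} := by
    calc v i (M \ H i) ≤ v i ((M \ YS) ∪ (YS \ H i)) := hmono i _ _ hsubset
      _ ≤ v i (M \ YS) + v i (YS \ H i) := hsub i _ _
      _ ≤ _ := by linarith
  have hn1 : (0:ℝ) < (n:ℝ) + 1 := by positivity
  have hMY0 : 0 ≤ v i (M \ YS) := hv0 i _
  have hZ0 : 0 ≤ v i (Z i) := hv0 i _
  have hc' : α * v i (M \ YS) ≤ 2 * ((n:ℝ)+1) * v i (Z i) := by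
    rw [div_mul_eq_mul_div, div_le_iff₀ (by positivity)] at hc
    linarith
  rw [div_mul_eq_mul_div, div_le_iff₀ (by positivity)]
  nlinarith [mul_nonneg (Nat.cast_nonneg n : (0:ℝ) ≤ n) hYi0,
    mul_le_mul_of_nonneg_left hb (Nat.cast_nonneg n : (0:ℝ) ≤ n),
    mul_le_mul_of_nonneg_right hα1 (mul_nonneg (Nat.cast_nonneg n : (0:ℝ) ≤ n) hYi0),
    mul_le_mul_of_nonneg_left hMH hα0.le]
end

section
/- Fix an agent i and let A ⊆ M be a nonempty set of goods. Let g* ∈ A be a good of agent i's highest value in A, i.e., v_i({g*}) ≥ v_i({g}) for all g ∈ A. Then v_i(A) ≤ n · v_i({g*}) + v_i(M \ H_i). -/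
lemma value_le_sum_singletons
    {G : Type*} [DecidableEq G]
    (w : Finset G → ℝ) (hnorm : w ∅ = 0)
    (hsub : ∀ A B, w (A ∪ B) ≤ w A + w B)
    (S : Finset G) : w S ≤ ∑ g ∈ S, w {g} := by
  induction S using Finset.induction_on with
  | empty => simp [hnorm]
  | @insert a s hx ih =>
    rw [Finset.sum_insert hx, Finset.insert_eq]
    exact le_trans (hsub {a} s) (by linarith)

/-- For a nonempty set `A ⊆ M` of goods and a good `g* ∈ A` of
agent `i`'s highest value in `A`, `v i A ≤ n · v i {g*} + v i (M \ H i)`. -/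
theorem bundle_value_upper_bound
    {G : Type*} [DecidableEq G]
    (n : ℕ) (hn : 0 < n) (M : Finset G) (hm : n ≤ M.card)
    (v : Fin n → Finset G → ℝ)
    (hv0 : ∀ i A, 0 ≤ v i A)
    (hnorm : ∀ i, v i ∅ = 0)
    (hmono : ∀ i A B, A ⊆ B → v i A ≤ v i B)
    (hsub : ∀ i A B, v i (A ∪ B) ≤ v i A + v i B)
    (i : Fin n)
    (Hi : Finset G) (hHiM : Hi ⊆ M) (hHicard : Hi.card = n)
    (hHitop : ∀ g ∈ Hi, ∀ g' ∈ M \ Hi, v i {g'} ≤ v i {g})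
    (A : Finset G) (hAM : A ⊆ M) (hA : A.Nonempty)
    (gstar : G) (hgA : gstar ∈ A)
    (hgmax : ∀ g ∈ A, v i {g} ≤ v i {gstar}) :
    v i A ≤ (n : ℝ) * v i {gstar} + v i (M \ Hi) := by
  have hsplit : A ⊆ (A ∩ Hi) ∪ (M \ Hi) := by
    intro g hg
    by_cases h : g ∈ Hi
    · exact Finset.mem_union_left _ (Finset.mem_inter.mpr ⟨hg, h⟩)
    · exact Finset.mem_union_right _ (Finset.mem_sdiff.mpr ⟨hAM hg, h⟩)
  have h1 : v i A ≤ v i (A ∩ Hi) + v i (M \ Hi) :=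
    le_trans (hmono i _ _ hsplit) (hsub i _ _)
  have h2 : v i (A ∩ Hi) ≤ ∑ g ∈ A ∩ Hi, v i {g} :=
    value_le_sum_singletons (v i) (hnorm i) (hsub i) _
  have h3 : ∑ g ∈ A ∩ Hi, v i {g} ≤ (A ∩ Hi).card * v i {gstar} := by
    calc ∑ g ∈ A ∩ Hi, v i {g} ≤ ∑ _g ∈ A ∩ Hi, v i {gstar} :=
            Finset.sum_le_sum (fun g hg => hgmax g (Finset.mem_inter.mp hg).1)
        _ = (A ∩ Hi).card * v i {gstar} := by
            rw [Finset.sum_const, nsmul_eq_mul]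
  have hcard : ((A ∩ Hi).card : ℝ) ≤ (n : ℝ) := by
    have : (A ∩ Hi).card ≤ Hi.card := Finset.card_le_card (Finset.inter_subset_right)
    exact_mod_cast hHicard ▸ this
  have h4 : ((A ∩ Hi).card : ℝ) * v i {gstar} ≤ (n : ℝ) * v i {gstar} :=
    mul_le_mul_of_nonneg_right hcard (hv0 i _)
  linarith
end

section
/- (Case p = −∞.) Fix α ∈ (0,1]. Suppose Y : {1,…,n} → M is injective and maximizes the minimum matching weight: for every injective Y' : {1,…,n} → M, min_i ( n · v_i({Y(i)}) + v_i(M \ H_i) ) ≥ min_i ( n · v_i({Y'(i)}) + v_i(M \ H_i) ). Suppose Z = (Z_1,…,Z_n) is an allocation with v_i(Z_i) ≥ (α/(4(n+1))) · ( n · v_i({Y(i)}) + v_i(M \ H_i) ) for every i. Then for every allocation X* = (X*_1,…,X*_n) of pairwise disjoint nonempty subsets of M, min_i v_i(Z_i) ≥ (α/(4(n+1))) · min_i v_i(X*_i). -/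
lemma subadd_sum {G : Type*} [DecidableEq G] (v : Finset G → ℝ)
    (hnorm : v ∅ = 0) (hsub : ∀ A B, v (A ∪ B) ≤ v A + v B) :
    ∀ A : Finset G, v A ≤ ∑ g ∈ A, v {g} := by
  intro A
  induction A using Finset.induction_on with
  | empty => simp [hnorm]
  | @insert a s ha ih =>
    rw [Finset.sum_insert ha, Finset.insert_eq]
    calc v ({a} ∪ s) ≤ v {a} + v s := hsub _ _
      _ ≤ v {a} + ∑ g ∈ s, v {g} := by linarith

/-- Case `p = -∞`: If `Y` maximizes the minimum matching weight
and `Z` satisfies the lower bound of Lemma "lower bound final valuation", then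
`min_i v i (Z i) ≥ (α/(4(n+1))) · min_i v i (X* i)` for every allocation `X*`
of pairwise disjoint nonempty subsets of `M`. -/
theorem egalitarian_welfare_approximation
    {G : Type*} [DecidableEq G]
    (n : ℕ) (hn : 0 < n) (M : Finset G) (hm : n ≤ M.card)
    (v : Fin n → Finset G → ℝ)
    (hv0 : ∀ i A, 0 ≤ v i A)
    (hnorm : ∀ i, v i ∅ = 0)
    (hmono : ∀ i A B, A ⊆ B → v i A ≤ v i B)
    (hsub : ∀ i A B, v i (A ∪ B) ≤ v i A + v i B)
    (α : ℝ) (hα0 : 0 < α) (hα1 : α ≤ 1)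
    (H : Fin n → Finset G)
    (hHM : ∀ i, H i ⊆ M) (hHcard : ∀ i, (H i).card = n)
    (hHtop : ∀ i, ∀ g ∈ H i, ∀ g' ∈ M \ H i, v i {g'} ≤ v i {g})
    (Y : Fin n → G) (hYM : ∀ i, Y i ∈ M) (hYinj : Function.Injective Y)
    (hYopt : ∀ Y' : Fin n → G, Function.Injective Y' → (∀ i, Y' i ∈ M) →
      Finset.univ.inf' ⟨⟨0, hn⟩, Finset.mem_univ _⟩
          (fun i => (n : ℝ) * v i {Y' i} + v i (M \ H i))
        ≤ Finset.univ.inf' ⟨⟨0, hn⟩, Finset.mem_univ _⟩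
          (fun i => (n : ℝ) * v i {Y i} + v i (M \ H i)))
    (Z : Fin n → Finset G)
    (hZM : ∀ i, Z i ⊆ M)
    (hZdisj : ∀ i j, i ≠ j → Disjoint (Z i) (Z j))
    (hZ : ∀ i, (α / (4 * ((n : ℝ) + 1))) *
        ((n : ℝ) * v i {Y i} + v i (M \ H i)) ≤ v i (Z i)) :
    ∀ Xs : Fin n → Finset G, (∀ i, Xs i ⊆ M) → (∀ i, (Xs i).Nonempty) →
      (∀ i j, i ≠ j → Disjoint (Xs i) (Xs j)) →
      (α / (4 * ((n : ℝ) + 1))) *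
          Finset.univ.inf' ⟨⟨0, hn⟩, Finset.mem_univ _⟩ (fun i => v i (Xs i))
        ≤ Finset.univ.inf' ⟨⟨0, hn⟩, Finset.mem_univ _⟩ (fun i => v i (Z i)) := by
  intro Xs hXsM hXsne hXsdisj
  set c : ℝ := α / (4 * ((n : ℝ) + 1)) with hc
  have hcpos : 0 < c := by
    apply div_pos hα0; positivity
  -- choose Y' i ∈ Xs i maximizing v i {·}
  choose Y' hY'mem hY'max using fun i => Finset.exists_max_image (Xs i) (fun g => v i {g}) (hXsne i)
  have hY'M : ∀ i, Y' i ∈ M := fun i => hXsM i (hY'mem i)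
  have hY'inj : Function.Injective Y' := by
    intro i j hij
    by_contra h
    exact Finset.disjoint_left.mp (hXsdisj i j h) (hY'mem i) (by rw [hij]; exact hY'mem j)
  -- key: v i (Xs i) ≤ n * v i {Y' i} + v i (M \ H i)
  have key : ∀ i, v i (Xs i) ≤ (n : ℝ) * v i {Y' i} + v i (M \ H i) := by
    intro i
    have hsplit : Xs i = (Xs i ∩ H i) ∪ (Xs i \ H i) := by
      ext g; simp [Finset.mem_inter, Finset.mem_sdiff]; tauto
    have h1 : v i (Xs i ∩ H i) ≤ (n : ℝ) * v i {Y' i} := by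
      calc v i (Xs i ∩ H i) ≤ ∑ g ∈ Xs i ∩ H i, v i {g} :=
            subadd_sum (v i) (hnorm i) (hsub i) _
        _ ≤ ∑ _g ∈ Xs i ∩ H i, v i {Y' i} := by
            apply Finset.sum_le_sum
            intro g hg
            exact hY'max i g (Finset.mem_of_mem_inter_left hg)
        _ = ((Xs i ∩ H i).card : ℝ) * v i {Y' i} := by
            rw [Finset.sum_const, nsmul_eq_mul]
        _ ≤ (n : ℝ) * v i {Y' i} := by
            apply mul_le_mul_of_nonneg_right _ (hv0 i _)
            have : (Xs i ∩ H i).card ≤ n := by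
              rw [← hHcard i]
              exact Finset.card_le_card (Finset.inter_subset_right)
            exact_mod_cast this
    have h2 : v i (Xs i \ H i) ≤ v i (M \ H i) := by
      apply hmono
      exact Finset.sdiff_subset_sdiff (hXsM i) (le_refl _)
    calc v i (Xs i) = v i ((Xs i ∩ H i) ∪ (Xs i \ H i)) := by rw [← hsplit]
      _ ≤ v i (Xs i ∩ H i) + v i (Xs i \ H i) := hsub i _ _
      _ ≤ (n : ℝ) * v i {Y' i} + v i (M \ H i) := by linarith
  -- min Xs ≤ min W(Y') ≤ min W(Y)
  have hstep1 : Finset.univ.inf' ⟨⟨0, hn⟩, Finset.mem_univ _⟩ (fun i => v i (Xs i))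
      ≤ Finset.univ.inf' ⟨⟨0, hn⟩, Finset.mem_univ _⟩
        (fun i => (n : ℝ) * v i {Y' i} + v i (M \ H i)) := by
    apply Finset.le_inf'
    intro i _
    exact le_trans (Finset.inf'_le _ (Finset.mem_univ i)) (key i)
  have hstep2 := hYopt Y' hY'inj hY'M
  have hstep3 : c * Finset.univ.inf' ⟨⟨0, hn⟩, Finset.mem_univ _⟩
      (fun i => (n : ℝ) * v i {Y i} + v i (M \ H i))
      ≤ Finset.univ.inf' ⟨⟨0, hn⟩, Finset.mem_univ _⟩ (fun i => v i (Z i)) := by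
    apply Finset.le_inf'
    intro i _
    calc c * Finset.univ.inf' ⟨⟨0, hn⟩, Finset.mem_univ _⟩
          (fun i => (n : ℝ) * v i {Y i} + v i (M \ H i))
        ≤ c * ((n : ℝ) * v i {Y i} + v i (M \ H i)) :=
          mul_le_mul_of_nonneg_left (Finset.inf'_le _ (Finset.mem_univ i)) hcpos.le
      _ ≤ v i (Z i) := hZ i
  calc c * Finset.univ.inf' ⟨⟨0, hn⟩, Finset.mem_univ _⟩ (fun i => v i (Xs i))
      ≤ c * Finset.univ.inf' ⟨⟨0, hn⟩, Finset.mem_univ _⟩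
        (fun i => (n : ℝ) * v i {Y' i} + v i (M \ H i)) :=
        mul_le_mul_of_nonneg_left hstep1 hcpos.le
    _ ≤ c * Finset.univ.inf' ⟨⟨0, hn⟩, Finset.mem_univ _⟩
        (fun i => (n : ℝ) * v i {Y i} + v i (M \ H i)) :=
        mul_le_mul_of_nonneg_left hstep2 hcpos.le
    _ ≤ Finset.univ.inf' ⟨⟨0, hn⟩, Finset.mem_univ _⟩ (fun i => v i (Z i)) := hstep3
end

section
/- (Case p = 0, Nash welfare.) Fix α ∈ (0,1]. Suppose Y : {1,…,n} → M is injective and maximizes the product objective: for every injective Y' : {1,…,n} → M, Π_i ( n · v_i({Y(i)}) + v_i(M \ H_i) ) ≥ Π_i ( n · v_i({Y'(i)}) + v_i(M \ H_i) ). Suppose Z = (Z_1,…,Z_n) is an allocation with v_i(Z_i) ≥ (α/(4(n+1))) · ( n · v_i({Y(i)}) + v_i(M \ H_i) ) for every i. Then for every allocation X* = (X*_1,…,X*_n) of pairwise disjoint nonempty subsets of M, Π_i v_i(Z_i) ≥ (α/(4(n+1)))^n · Π_i v_i(X*_i). -/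
/-- Case `p = 0`, Nash welfare: If `Y` maximizes the product
objective `Π_i (n · v i {Y i} + v i (M \ H i))` and `Z` satisfies the lower
bound of the key lemma, then
`Π_i v i (Z i) ≥ (α/(4(n+1)))^n · Π_i v i (X* i)` for every allocation `X*`
of pairwise disjoint nonempty subsets of `M`. -/
theorem nash_welfare_approximation
    {G : Type*} [DecidableEq G]
    (n : ℕ) (hn : 0 < n) (M : Finset G) (hm : n ≤ M.card)
    (v : Fin n → Finset G → ℝ)
    (hv0 : ∀ i A, 0 ≤ v i A)
    (hnorm : ∀ i, v i ∅ = 0)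
    (hmono : ∀ i A B, A ⊆ B → v i A ≤ v i B)
    (hsub : ∀ i A B, v i (A ∪ B) ≤ v i A + v i B)
    (α : ℝ) (hα0 : 0 < α) (hα1 : α ≤ 1)
    (H : Fin n → Finset G)
    (hHM : ∀ i, H i ⊆ M) (hHcard : ∀ i, (H i).card = n)
    (hHtop : ∀ i, ∀ g ∈ H i, ∀ g' ∈ M \ H i, v i {g'} ≤ v i {g})
    (Y : Fin n → G) (hYM : ∀ i, Y i ∈ M) (hYinj : Function.Injective Y)
    (hYopt : ∀ Y' : Fin n → G, Function.Injective Y' → (∀ i, Y' i ∈ M) →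
      ∏ i, ((n : ℝ) * v i {Y' i} + v i (M \ H i))
        ≤ ∏ i, ((n : ℝ) * v i {Y i} + v i (M \ H i)))
    (Z : Fin n → Finset G)
    (hZM : ∀ i, Z i ⊆ M)
    (hZdisj : ∀ i j, i ≠ j → Disjoint (Z i) (Z j))
    (hZ : ∀ i, (α / (4 * ((n : ℝ) + 1))) *
        ((n : ℝ) * v i {Y i} + v i (M \ H i)) ≤ v i (Z i)) :
    ∀ Xs : Fin n → Finset G, (∀ i, Xs i ⊆ M) → (∀ i, (Xs i).Nonempty) →
      (∀ i j, i ≠ j → Disjoint (Xs i) (Xs j)) →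
      (α / (4 * ((n : ℝ) + 1))) ^ n * ∏ i, v i (Xs i) ≤ ∏ i, v i (Z i) := by
  intro Xs hXsM hXsNe hXsDisj
  set c : ℝ := α / (4 * ((n : ℝ) + 1)) with hc
  have hcpos : 0 < c := by
    apply div_pos hα0
    positivity
  -- choose best good in each Xs i
  have hbest : ∀ i, ∃ g ∈ Xs i, ∀ g' ∈ Xs i, v i {g'} ≤ v i {g} := by
    intro i
    obtain ⟨g, hg, hmax⟩ := (Xs i).exists_max_image (fun g => v i {g}) (hXsNe i)
    exact ⟨g, hg, hmax⟩
  choose Y' hY'mem hY'max using hbest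
  have hY'M : ∀ i, Y' i ∈ M := fun i => hXsM i (hY'mem i)
  have hY'inj : Function.Injective Y' := by
    intro i j hij
    by_contra hne
    exact Finset.disjoint_left.mp (hXsDisj i j hne) (hY'mem i) (hij ▸ hY'mem j)
  -- subadditivity over singletons
  have hsum : ∀ i (A : Finset G), v i A ≤ ∑ g ∈ A, v i {g} := by
    intro i A
    induction A using Finset.induction with
    | empty => simp [hnorm i]
    | @insert a s ha ih =>
      rw [Finset.sum_insert ha]
      calc v i (insert a s) = v i ({a} ∪ s) := by rw [Finset.insert_eq]
        _ ≤ v i {a} + v i s := hsub i _ _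
        _ ≤ v i {a} + ∑ g ∈ s, v i {g} := by linarith
  -- key bound per agent
  have hkey : ∀ i, v i (Xs i) ≤ (n : ℝ) * v i {Y' i} + v i (M \ H i) := by
    intro i
    have hsplit : Xs i = (Xs i ∩ H i) ∪ (Xs i \ H i) := by
      ext g; simp [Finset.mem_inter, Finset.mem_sdiff, Finset.mem_union]; tauto
    have h1 : v i (Xs i) ≤ v i (Xs i ∩ H i) + v i (Xs i \ H i) := by
      calc v i (Xs i) = v i ((Xs i ∩ H i) ∪ (Xs i \ H i)) := by rw [← hsplit]
        _ ≤ _ := hsub i _ _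
    have h2 : v i (Xs i ∩ H i) ≤ (n : ℝ) * v i {Y' i} := by
      calc v i (Xs i ∩ H i) ≤ ∑ g ∈ Xs i ∩ H i, v i {g} := hsum i _
        _ ≤ ∑ _g ∈ Xs i ∩ H i, v i {Y' i} := by
            apply Finset.sum_le_sum
            intro g hg
            exact hY'max i g (Finset.mem_of_mem_inter_left hg)
        _ = ((Xs i ∩ H i).card : ℝ) * v i {Y' i} := by
            rw [Finset.sum_const, nsmul_eq_mul]
        _ ≤ (n : ℝ) * v i {Y' i} := by
            apply mul_le_mul_of_nonneg_right _ (hv0 i _)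
            have : (Xs i ∩ H i).card ≤ n := by
              rw [← hHcard i]
              exact Finset.card_le_card (Finset.inter_subset_right)
            exact_mod_cast this
    have h3 : v i (Xs i \ H i) ≤ v i (M \ H i) :=
      hmono i _ _ (Finset.sdiff_subset_sdiff (hXsM i) le_rfl)
    linarith
  have hRHSnn : ∀ i, (0:ℝ) ≤ (n : ℝ) * v i {Y i} + v i (M \ H i) := by
    intro i; have := hv0 i {Y i}; have := hv0 i (M \ H i); positivity
  calc c ^ n * ∏ i, v i (Xs i)
      ≤ c ^ n * ∏ i, ((n : ℝ) * v i {Y' i} + v i (M \ H i)) := by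
        apply mul_le_mul_of_nonneg_left _ (by positivity)
        exact Finset.prod_le_prod (fun i _ => hv0 i _) (fun i _ => hkey i)
    _ ≤ c ^ n * ∏ i, ((n : ℝ) * v i {Y i} + v i (M \ H i)) := by
        apply mul_le_mul_of_nonneg_left (hYopt Y' hY'inj hY'M) (by positivity)
    _ = ∏ i, c * ((n : ℝ) * v i {Y i} + v i (M \ H i)) := by
        rw [Finset.prod_mul_distrib, Finset.prod_const, Finset.card_univ,
          Fintype.card_fin]
    _ ≤ ∏ i, v i (Z i) := by
        apply Finset.prod_le_prod
        · intro i _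
          exact mul_nonneg hcpos.le (hRHSnn i)
        · intro i _
          exact hZ i
end

section
/- (Case p ∈ (0,1].) Fix α ∈ (0,1] and a real p with 0 < p ≤ 1. Suppose Y : {1,…,n} → M is injective and maximizes the matching objective: for every injective Y' : {1,…,n} → M, Σ_i ( n · v_i({Y(i)}) + v_i(M \ H_i) )^p ≥ Σ_i ( n · v_i({Y'(i)}) + v_i(M \ H_i) )^p. Suppose Z = (Z_1,…,Z_n) is an allocation with v_i(Z_i) ≥ (α/(4(n+1))) · ( n · v_i({Y(i)}) + v_i(M \ H_i) ) for every i. Then for every allocation X* = (X*_1,…,X*_n) of pairwise disjoint nonempty subsets of M, Σ_i v_i(Z_i)^p ≥ (α/(4(n+1)))^p · Σ_i v_i(X*_i)^p. -/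
/-!
Each bundle `X*_i` contains a good `g_i` with `v_i(X*_i) ≤ n · v_i({g_i}) + v_i(M \ H_i)`: by
subadditivity the part of `X*_i` inside `H_i` is worth at most `|H_i| = n` times its best single
good, and the rest lies in `M \ H_i`. Disjointness makes `i ↦ g_i` an injective matching, so the
optimality of `Y` and the lower bound on `v_i(Z_i)` finish the proof, `x ↦ x^p` being monotone.
-/

open Finset

section SetFunction

variable {G : Type*} [DecidableEq G]

theorem le_sum_singleton {β : Type*} [AddCommMonoid β] [PartialOrder β]
    [IsOrderedAddMonoid β] {f : Finset G → β} (hf0 : f ∅ = 0)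
    (hsub : ∀ A B, f (A ∪ B) ≤ f A + f B) (S : Finset G) :
    f S ≤ ∑ g ∈ S, f {g} := by
  induction S using Finset.induction_on with
  | empty => rw [hf0, sum_empty]
  | insert a s ha ih =>
    rw [sum_insert ha, insert_eq]
    exact (hsub {a} s).trans (add_le_add_right ih _)

theorem exists_mem_le_card_mul_add_sdiff {f : Finset G → ℝ} (hf0 : f ∅ = 0)
    (hmono : Monotone f) (hsub : ∀ A B, f (A ∪ B) ≤ f A + f B)
    {X M H : Finset G} (hXM : X ⊆ M) (hX : X.Nonempty) :
    ∃ g ∈ X, f X ≤ H.card * f {g} + f (M \ H) := by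
  have hnonneg : ∀ A, 0 ≤ f A := fun A => hf0 ▸ hmono (empty_subset A)
  have hbest : ∃ g ∈ X, ∀ x ∈ X ∩ H, f {x} ≤ f {g} := by
    by_cases hXH : (X ∩ H).Nonempty
    · obtain ⟨g, hg, hgmax⟩ := exists_max_image (X ∩ H) (fun x => f {x}) hXH
      exact ⟨g, (mem_inter.mp hg).1, hgmax⟩
    · obtain ⟨g, hg⟩ := hX
      exact ⟨g, hg, fun x hx => absurd ⟨x, hx⟩ hXH⟩
  obtain ⟨g, hg, hgmax⟩ := hbest
  refine ⟨g, hg, ?_⟩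
  have hinside : f (X ∩ H) ≤ H.card * f {g} :=
    calc f (X ∩ H) ≤ ∑ x ∈ X ∩ H, f {x} := le_sum_singleton hf0 hsub _
      _ ≤ (X ∩ H).card • f {g} := sum_le_card_nsmul _ _ _ hgmax
      _ ≤ H.card * f {g} := by
        rw [nsmul_eq_mul]
        gcongr
        · exact hnonneg _
        · exact inter_subset_right
  calc f X = f (X ∩ H ∪ X \ H) := by rw [union_comm, sdiff_union_inter]
    _ ≤ f (X ∩ H) + f (X \ H) := hsub _ _
    _ ≤ H.card * f {g} + f (M \ H) := add_le_add hinside (hmono (sdiff_subset_sdiff hXM le_rfl))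

end SetFunction

theorem Function.injective_of_mem_of_pairwise_disjoint {ι α : Type*} {X : ι → Finset α}
    {y : ι → α} (hdisj : Pairwise fun i j => Disjoint (X i) (X j)) (hmem : ∀ i, y i ∈ X i) :
    Function.Injective y := by
  intro i j hij
  by_contra hne
  exact disjoint_left.mp (hdisj hne) (hmem i) (hij ▸ hmem j)

theorem pmean_welfare_approximation_pos_p_general
    {G : Type*} [DecidableEq G]
    (n : ℕ) (M : Finset G)
    (v : Fin n → Finset G → ℝ)
    (hnorm : ∀ i, v i ∅ = 0)
    (hmono : ∀ i A B, A ⊆ B → v i A ≤ v i B)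
    (hsub : ∀ i A B, v i (A ∪ B) ≤ v i A + v i B)
    (α : ℝ) (hα0 : 0 < α)
    (p : ℝ) (hp0 : 0 < p)
    (H : Fin n → Finset G)
    (hHcard : ∀ i, (H i).card = n)
    (Y : Fin n → G)
    (hYopt : ∀ Y' : Fin n → G, Function.Injective Y' → (∀ i, Y' i ∈ M) →
      ∑ i, ((n : ℝ) * v i {Y' i} + v i (M \ H i)) ^ p
        ≤ ∑ i, ((n : ℝ) * v i {Y i} + v i (M \ H i)) ^ p)
    (Z : Fin n → Finset G)
    (hZ : ∀ i, (α / (4 * ((n : ℝ) + 1))) *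
        ((n : ℝ) * v i {Y i} + v i (M \ H i)) ≤ v i (Z i)) :
    ∀ Xs : Fin n → Finset G, (∀ i, Xs i ⊆ M) → (∀ i, (Xs i).Nonempty) →
      (∀ i j, i ≠ j → Disjoint (Xs i) (Xs j)) →
      (α / (4 * ((n : ℝ) + 1))) ^ p * ∑ i, v i (Xs i) ^ p
        ≤ ∑ i, v i (Z i) ^ p := by
  intro Xs hXsM hXsne hXsdisj
  set c : ℝ := α / (4 * ((n : ℝ) + 1))
  have hc0 : 0 ≤ c := by positivity
  have hv0 : ∀ i A, 0 ≤ v i A := fun i A => hnorm i ▸ hmono i _ _ (empty_subset A)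
  have hgood : ∀ i, ∃ g ∈ Xs i, v i (Xs i) ≤ (n : ℝ) * v i {g} + v i (M \ H i) := fun i => by
    simpa only [hHcard i] using exists_mem_le_card_mul_add_sdiff (H := H i) (hnorm i)
      (fun A B => hmono i A B) (hsub i) (hXsM i) (hXsne i)
  have hY0 : ∀ i, 0 ≤ (n : ℝ) * v i {Y i} + v i (M \ H i) := fun i =>
    add_nonneg (mul_nonneg n.cast_nonneg (hv0 _ _)) (hv0 _ _)
  choose Y' hY'mem hY'bound using hgood
  have hY'inj : Function.Injective Y' :=
    Function.injective_of_mem_of_pairwise_disjoint (fun i j => hXsdisj i j) hY'mem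
  calc c ^ p * ∑ i, v i (Xs i) ^ p
      ≤ c ^ p * ∑ i, ((n : ℝ) * v i {Y' i} + v i (M \ H i)) ^ p := by
        gcongr with i
        exacts [hv0 _ _, hY'bound i]
    _ ≤ c ^ p * ∑ i, ((n : ℝ) * v i {Y i} + v i (M \ H i)) ^ p := by
        gcongr ?_ * ?_
        exact hYopt Y' hY'inj fun i => hXsM i (hY'mem i)
    _ = ∑ i, (c * ((n : ℝ) * v i {Y i} + v i (M \ H i))) ^ p := by
        rw [mul_sum]
        congr! 1 with i
        rw [Real.mul_rpow hc0 (hY0 i)]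
    _ ≤ ∑ i, v i (Z i) ^ p := by
        gcongr with i
        exacts [mul_nonneg hc0 (hY0 i), hZ i]

/-- STATEMENT 12 (Case `p ∈ (0,1]`): If `Y` maximizes the matching objective
`Σ_i (n · v i {Y i} + v i (M \ H i))^p` and `Z` satisfies the lower bound of
the key lemma, then `Σ_i v i (Z i)^p ≥ (α/(4(n+1)))^p · Σ_i v i (X* i)^p` for
every allocation `X*` of pairwise disjoint nonempty subsets of `M`. -/
theorem pmean_welfare_approximation_pos_p
    {G : Type*} [DecidableEq G]
    (n : ℕ) (hn : 0 < n) (M : Finset G) (hm : n ≤ M.card)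
    (v : Fin n → Finset G → ℝ)
    (hv0 : ∀ i A, 0 ≤ v i A)
    (hnorm : ∀ i, v i ∅ = 0)
    (hmono : ∀ i A B, A ⊆ B → v i A ≤ v i B)
    (hsub : ∀ i A B, v i (A ∪ B) ≤ v i A + v i B)
    (α : ℝ) (hα0 : 0 < α) (hα1 : α ≤ 1)
    (p : ℝ) (hp0 : 0 < p) (hp1 : p ≤ 1)
    (H : Fin n → Finset G)
    (hHM : ∀ i, H i ⊆ M) (hHcard : ∀ i, (H i).card = n)
    (hHtop : ∀ i, ∀ g ∈ H i, ∀ g' ∈ M \ H i, v i {g'} ≤ v i {g})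
    (Y : Fin n → G) (hYM : ∀ i, Y i ∈ M) (hYinj : Function.Injective Y)
    (hYopt : ∀ Y' : Fin n → G, Function.Injective Y' → (∀ i, Y' i ∈ M) →
      ∑ i, ((n : ℝ) * v i {Y' i} + v i (M \ H i)) ^ p
        ≤ ∑ i, ((n : ℝ) * v i {Y i} + v i (M \ H i)) ^ p)
    (Z : Fin n → Finset G)
    (hZM : ∀ i, Z i ⊆ M)
    (hZdisj : ∀ i j, i ≠ j → Disjoint (Z i) (Z j))
    (hZ : ∀ i, (α / (4 * ((n : ℝ) + 1))) *
        ((n : ℝ) * v i {Y i} + v i (M \ H i)) ≤ v i (Z i)) :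
    ∀ Xs : Fin n → Finset G, (∀ i, Xs i ⊆ M) → (∀ i, (Xs i).Nonempty) →
      (∀ i j, i ≠ j → Disjoint (Xs i) (Xs j)) →
      (α / (4 * ((n : ℝ) + 1))) ^ p * ∑ i, v i (Xs i) ^ p
        ≤ ∑ i, v i (Z i) ^ p :=
  pmean_welfare_approximation_pos_p_general n M v hnorm hmono hsub α hα0 p hp0 H hHcard Y hYopt Z hZ
end

section
/- (Main theorem, complete allocation, Nash welfare.) For every ε with 0 < ε < 1/2 there exists a complete allocation X = (X_1,…,X_n) of M that is (1/2 − ε)-EFX and satisfies, for every allocation X* = (X*_1,…,X*_n) of pairwise disjoint subsets of M, Π_i v_i(X_i) ≥ ( (1 − 2ε)/(8(n+1)) )^n · Π_i v_i(X*_i). -/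
open Finset

section EnvyCycle
variable {G : Type*} [DecidableEq G]

private lemma subadd_biUnion {n : ℕ} (v : Finset G → ℝ) (h0 : v ∅ = 0)
    (hsub : ∀ A B : Finset G, v (A ∪ B) ≤ v A + v B)
    (hmono : ∀ A B : Finset G, A ⊆ B → v A ≤ v B)
    (s : Finset (Fin n)) (f : Fin n → Finset G) :
    v (s.biUnion f) ≤ ∑ k ∈ s, v (f k) := by
  classical
  induction s using Finset.induction_on with
  | empty => simp [h0]
  | @insert a s ha ih =>
      rw [Finset.biUnion_insert, Finset.sum_insert ha]
      calc v (f a ∪ s.biUnion f) ≤ v (f a) + v (s.biUnion f) := hsub _ _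
        _ ≤ _ := by linarith

private lemma envy_loop {n : ℕ} (hn : 0 < n) (M : Finset G) (v : Fin n → Finset G → ℝ)
    (hv0 : ∀ i A, 0 ≤ v i A)
    (hmono : ∀ i A B, A ⊆ B → v i A ≤ v i B)
    (hsub : ∀ i A B, v i (A ∪ B) ≤ v i A + v i B)
    (t : Fin n → ℝ) :
    ∀ (N : ℕ) (R : Finset G) (X : Fin n → Finset G), R.card ≤ N → R ⊆ M →
    (∀ i, X i ⊆ M) → (∀ i, Disjoint (X i) R) →
    (∀ i j, i ≠ j → Disjoint (X i) (X j)) →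
    (univ.biUnion X = M \ R) →
    (∀ i, (X i).Nonempty) →
    (∀ i, t i ≤ v i (X i)) →
    (∀ i j, ∀ g ∈ X j, v i (X j \ {g}) ≤ 2 * v i (X i)) →
    (∀ i, ∀ g ∈ R, v i {g} ≤ v i (X i)) →
    ∃ Y : Fin n → Finset G, (∀ i, Y i ⊆ M) ∧ (∀ i j, i ≠ j → Disjoint (Y i) (Y j)) ∧
      (univ.biUnion Y = M) ∧ (∀ i, (Y i).Nonempty) ∧ (∀ i, t i ≤ v i (Y i)) ∧
      (∀ i j, ∀ g ∈ Y j, v i (Y j \ {g}) ≤ 2 * v i (Y i)) := by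
  classical
  intro N
  induction N with
  | zero =>
      intro R X hcard hRM hXM hXR hdisj hun hne ht hefx hpool
      have hR : R = ∅ := Finset.card_eq_zero.mp (Nat.le_antisymm hcard (Nat.zero_le _))
      subst hR
      exact ⟨X, hXM, hdisj, by simpa using hun, hne, ht, hefx⟩
  | succ N ih =>
      intro R X hcard hRM hXM hXR hdisj hun hne ht hefx hpool
      by_cases hR : R = ∅
      · subst hR
        exact ⟨X, hXM, hdisj, by simpa using hun, hne, ht, hefx⟩
      · have hRne : R.Nonempty := Finset.nonempty_iff_ne_empty.mpr hR
        -- step 1: choose the best reassignment permutation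
        set F : Equiv.Perm (Fin n) → ℝ := fun π => ∑ i, v i (X (π i)) with hF
        have hfiltne : (univ.filter
            (fun π : Equiv.Perm (Fin n) => ∀ i, v i (X i) ≤ v i (X (π i)))).Nonempty := by
          refine ⟨1, ?_⟩
          simp
        obtain ⟨π, hπmem, hπmax⟩ := Finset.exists_max_image _ F hfiltne
        have hπle : ∀ i, v i (X i) ≤ v i (X (π i)) := (Finset.mem_filter.mp hπmem).2
        set Y : Fin n → Finset G := fun i => X (π i) with hY
        have hYM : ∀ i, Y i ⊆ M := fun i => hXM _
        have hYR : ∀ i, Disjoint (Y i) R := fun i => hXR _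
        have hYdisj : ∀ i j, i ≠ j → Disjoint (Y i) (Y j) := by
          intro i j hij
          exact hdisj _ _ (fun hc => hij (π.injective hc))
        have hYun : univ.biUnion Y = M \ R := by
          rw [← hun]
          apply Finset.Subset.antisymm
          · intro a ha
            obtain ⟨i, _, hai⟩ := Finset.mem_biUnion.mp ha
            exact Finset.mem_biUnion.mpr ⟨π i, mem_univ _, hai⟩
          · intro a ha
            obtain ⟨i, _, hai⟩ := Finset.mem_biUnion.mp ha
            refine Finset.mem_biUnion.mpr ⟨π.symm i, mem_univ _, ?_⟩
            show a ∈ X (π (π.symm i))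
            rw [Equiv.apply_symm_apply]
            exact hai
        have hYne : ∀ i, (Y i).Nonempty := fun i => hne _
        have hYt : ∀ i, t i ≤ v i (Y i) := fun i => (ht i).trans (hπle i)
        have hYefx : ∀ i j, ∀ g ∈ Y j, v i (Y j \ {g}) ≤ 2 * v i (Y i) := by
          intro i j g hg
          have := hefx i (π j) g hg
          have h2 : v i (X i) ≤ v i (Y i) := hπle i
          calc v i (Y j \ {g}) ≤ 2 * v i (X i) := this
            _ ≤ 2 * v i (Y i) := by linarith
        have hYpool : ∀ i, ∀ g ∈ R, v i {g} ≤ v i (Y i) := by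
          intro i g hg; exact (hpool i g hg).trans (hπle i)
        -- step 2: an unenvied agent exists
        have hexun : ∃ j, ∀ i, v i (Y j) ≤ v i (Y i) := by
          by_contra hcon
          push_neg at hcon
          choose f hf using hcon
          -- hf j : v (f j) (Y j) is envied: v (f j) (Y (f j)) < v (f j) (Y j)
          obtain ⟨a0, b0, hab0, heq0⟩ :=
            Finite.exists_ne_map_eq_of_infinite (fun k : ℕ => f^[k] ⟨0, hn⟩)
          have h2 : ∃ a b : ℕ, a < b ∧ f^[a] ⟨0, hn⟩ = f^[b] ⟨0, hn⟩ := by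
            rcases lt_or_gt_of_ne hab0 with hlt | hgt
            · exact ⟨a0, b0, hlt, heq0⟩
            · exact ⟨b0, a0, hgt, heq0.symm⟩
          obtain ⟨a, b, hab, heq⟩ := h2
          set x : Fin n := f^[a] ⟨0, hn⟩ with hx
          have hper : f^[b - a] x = x := by
            rw [hx, ← Function.iterate_add_apply, Nat.sub_add_cancel hab.le]
            exact heq.symm
          have hexq : ∃ q, 0 < q ∧ f^[q] x = x := ⟨b - a, Nat.sub_pos_of_lt hab, hper⟩
          set q := Nat.find hexq with hqdef
          obtain ⟨hqpos, hqper⟩ := Nat.find_spec hexq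
          have hmul : ∀ d, f^[q * d] x = x := by
            intro d
            induction d with
            | zero => simp
            | succ d ihd =>
                rw [Nat.mul_succ, Function.iterate_add_apply, hqper, ihd]
          have hmod : ∀ k, f^[k] x = f^[k % q] x := by
            intro k
            conv_lhs => rw [← Nat.mod_add_div k q]
            rw [Function.iterate_add_apply, hmul]
          set C : Finset (Fin n) := (range q).image (fun u => f^[u] x) with hC
          have hCmem : ∀ k, f^[k] x ∈ C := by
            intro k
            rw [hmod k]
            exact Finset.mem_image.mpr ⟨k % q, Finset.mem_range.mpr (Nat.mod_lt _ hqpos), rfl⟩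
          have hCex : ∀ y ∈ C, ∃ u, y = f^[u] x := by
            intro y hy
            obtain ⟨u, _, hu⟩ := Finset.mem_image.mp hy
            exact ⟨u, hu.symm⟩
          set finv : Fin n → Fin n := fun y => f^[q - 1] y with hfinv
          have hfinvC : ∀ y ∈ C, finv y ∈ C := by
            intro y hy
            obtain ⟨u, rfl⟩ := hCex y hy
            rw [hfinv]
            show f^[q-1] (f^[u] x) ∈ C
            rw [← Function.iterate_add_apply]
            exact hCmem _
          have hfinv_right : ∀ y ∈ C, f (finv y) = y := by
            intro y hy
            obtain ⟨u, rfl⟩ := hCex y hy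
            show f (f^[q-1] (f^[u] x)) = f^[u] x
            have hq1 : q - 1 + 1 = q := by omega
            calc f (f^[q - 1] (f^[u] x))
                = f^[q - 1 + 1] (f^[u] x) := (Function.iterate_succ_apply' f (q-1) _).symm
              _ = f^[q] (f^[u] x) := by rw [hq1]
              _ = f^[u] (f^[q] x) := by
                  rw [← Function.iterate_add_apply, Nat.add_comm q u,
                    Function.iterate_add_apply]
              _ = f^[u] x := by rw [hqper]
          set σ : Fin n → Fin n := fun i => if i ∈ C then finv i else i with hσ
          have hσinj : Function.Injective σ := by
            intro p r hpr
            by_cases hp : p ∈ C <;> by_cases hr : r ∈ C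
            · have hmm : f (σ p) = f (σ r) := by rw [hpr]
              simp only [hσ, if_pos hp, if_pos hr] at hmm
              rwa [hfinv_right p hp, hfinv_right r hr] at hmm
            · exfalso
              have h1 : σ p = finv p := by simp [hσ, hp]
              have h2 : σ r = r := by simp [hσ, hr]
              apply hr
              rw [← hpr, h1] at h2
              rw [← h2]
              exact hfinvC p hp
            · exfalso
              have h1 : σ r = finv r := by simp [hσ, hr]
              have h2 : σ p = p := by simp [hσ, hp]
              apply hp
              rw [hpr, h1] at h2
              rw [← h2]
              exact hfinvC r hr
            · simp only [hσ, if_neg hp, if_neg hr] at hpr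
              exact hpr
          set σE : Equiv.Perm (Fin n) :=
            Equiv.ofBijective σ (Finite.injective_iff_bijective.mp hσinj) with hσE
          have hσEapp : ∀ i, σE i = σ i := fun i => rfl
          set π' : Equiv.Perm (Fin n) := σE.trans π with hπ'
          have hπ'app : ∀ i, π' i = π (σ i) := fun i => rfl
          -- strict improvement facts
          have hstrict : ∀ i ∈ C, v i (Y i) < v i (X (π' i)) := by
            intro i hi
            have h1 : π' i = π (finv i) := by
              rw [hπ'app i]
              congr 1
              simp [hσ, hi]
            have h2 : f (finv i) = i := hfinv_right i hi
            have := hf (finv i)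
            rw [h2] at this
            rw [h1]
            exact this
          have hge : ∀ i, v i (X (π i)) ≤ v i (X (π' i)) := by
            intro i
            by_cases hi : i ∈ C
            · exact le_of_lt ((hstrict i hi))
            · have heq' : π' i = π i := by
                rw [hπ'app i]
                congr 1
                simp [hσ, hi]
              rw [heq']
          have hπ'mem : π' ∈ univ.filter
              (fun π0 : Equiv.Perm (Fin n) => ∀ i, v i (X i) ≤ v i (X (π0 i))) := by
            rw [Finset.mem_filter]
            exact ⟨mem_univ _, fun i => (hπle i).trans (hge i)⟩
          have hxC : x ∈ C := by
            have := hCmem 0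
            simpa using this
          have hlt : F π < F π' := by
            apply Finset.sum_lt_sum
            · intro i _; exact hge i
            · exact ⟨x, mem_univ _, hstrict x hxC⟩
          exact absurd (hπmax π' hπ'mem) (not_le.mpr hlt)
        obtain ⟨j, hj⟩ := hexun
        -- step 3: give the unenvied agent its favourite pool good
        obtain ⟨g₀, hg₀R, hg₀max⟩ := Finset.exists_max_image R (fun g => v j {g}) hRne
        have hg₀M : g₀ ∈ M := hRM hg₀R
        have hg₀notY : ∀ i, g₀ ∉ Y i := by
          intro i hgi
          exact (Finset.disjoint_left.mp (hYR i)) hgi hg₀R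
        set X' : Fin n → Finset G := fun k => if k = j then Y j ∪ {g₀} else Y k with hX'
        have hX'j : X' j = Y j ∪ {g₀} := by rw [hX']; simp
        have hX'ne : ∀ k, k ≠ j → X' k = Y k := by intro k hk; rw [hX']; simp [hk]
        have hYle : ∀ i, v i (Y i) ≤ v i (X' i) := by
          intro i
          by_cases hi : i = j
          · subst hi; rw [hX'j]; exact hmono _ _ _ Finset.subset_union_left
          · rw [hX'ne i hi]
        have hsub' : ∀ k, Y k ⊆ X' k := by
          intro k
          by_cases hk : k = j
          · subst hk; rw [hX'j]; exact Finset.subset_union_left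
          · rw [hX'ne k hk]
        refine ih (R.erase g₀) X' ?_ ?_ ?_ ?_ ?_ ?_ ?_ ?_ ?_ ?_
        · have := Finset.card_erase_of_mem hg₀R
          omega
        · exact (Finset.erase_subset _ _).trans hRM
        · intro i
          by_cases hi : i = j
          · rw [hi, hX'j]
            exact Finset.union_subset (hYM j) (by simpa using hg₀M)
          · rw [hX'ne i hi]; exact hYM i
        · intro i
          by_cases hi : i = j
          · rw [hi, hX'j]
            apply Finset.disjoint_union_left.mpr
            constructor
            · exact (hYR j).mono_right (Finset.erase_subset _ _)
            · simp
          · rw [hX'ne i hi]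
            exact (hYR i).mono_right (Finset.erase_subset _ _)
        · intro i k hik
          by_cases hi : i = j
          · have hkj : k ≠ j := fun hc => hik (hi.trans hc.symm)
            rw [hi, hX'j, hX'ne k hkj]
            apply Finset.disjoint_union_left.mpr
            exact ⟨hYdisj _ _ (Ne.symm hkj), by simp [hg₀notY k]⟩
          · by_cases hk : k = j
            · rw [hk, hX'j, hX'ne i hi]
              apply Finset.disjoint_union_right.mpr
              exact ⟨hYdisj _ _ hi, by simp [hg₀notY i]⟩
            · rw [hX'ne i hi, hX'ne k hk]
              exact hYdisj _ _ hik
        · -- completeness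
          have h1 : univ.biUnion X' = (univ.biUnion Y) ∪ {g₀} := by
            apply Finset.Subset.antisymm
            · intro a ha
              obtain ⟨i, _, hai⟩ := Finset.mem_biUnion.mp ha
              by_cases hi : i = j
              · rw [hi, hX'j] at hai
                rcases Finset.mem_union.mp hai with h | h
                · exact Finset.mem_union.mpr (Or.inl (Finset.mem_biUnion.mpr ⟨j, mem_univ _, h⟩))
                · exact Finset.mem_union.mpr (Or.inr h)
              · rw [hX'ne i hi] at hai
                exact Finset.mem_union.mpr (Or.inl (Finset.mem_biUnion.mpr ⟨i, mem_univ _, hai⟩))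
            · intro a ha
              rcases Finset.mem_union.mp ha with h | h
              · obtain ⟨i, _, hai⟩ := Finset.mem_biUnion.mp h
                exact Finset.mem_biUnion.mpr ⟨i, mem_univ _, hsub' i hai⟩
              · refine Finset.mem_biUnion.mpr ⟨j, mem_univ _, ?_⟩
                rw [hX'j]
                exact Finset.mem_union.mpr (Or.inr h)
          rw [h1, hYun]
          ext a
          simp only [Finset.mem_union, Finset.mem_sdiff, Finset.mem_erase, Finset.mem_singleton]
          constructor
          · rintro (⟨haM, haR⟩ | rfl)
            · exact ⟨haM, fun hc => haR hc.2⟩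
            · exact ⟨hg₀M, fun hc => hc.1 rfl⟩
          · rintro ⟨haM, hc⟩
            by_cases hag : a = g₀
            · exact Or.inr hag
            · exact Or.inl ⟨haM, fun haR => hc ⟨hag, haR⟩⟩
        · intro k
          exact (hYne k).mono (hsub' k)
        · intro i
          exact (hYt i).trans (hYle i)
        · -- EFX invariant
          intro i k g hg
          by_cases hk : k = j
          · rw [hk] at hg ⊢
            rw [hX'j] at hg ⊢
            by_cases hgg : g = g₀
            · rw [hgg]
              have hset : (Y j ∪ {g₀}) \ {g₀} = Y j := by
                ext a
                simp only [Finset.mem_sdiff, Finset.mem_union, Finset.mem_singleton]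
                constructor
                · rintro ⟨h1 | h1, h2⟩
                  · exact h1
                  · exact absurd h1 h2
                · intro ha
                  exact ⟨Or.inl ha, fun hc => hg₀notY j (hc ▸ ha)⟩
              rw [hset]
              have h1 : v i (Y j) ≤ v i (Y i) := hj i
              have h2 : v i (Y i) ≤ v i (X' i) := hYle i
              have h3 : 0 ≤ v i (X' i) := hv0 _ _
              linarith
            · have hgY : g ∈ Y j := by
                rcases Finset.mem_union.mp hg with h | h
                · exact h
                · exact absurd (Finset.mem_singleton.mp h) hgg
              have hset : (Y j ∪ {g₀}) \ {g} = (Y j \ {g}) ∪ {g₀} := by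
                ext a
                simp only [Finset.mem_sdiff, Finset.mem_union, Finset.mem_singleton]
                constructor
                · rintro ⟨h1 | h1, h2⟩
                  · exact Or.inl ⟨h1, h2⟩
                  · exact Or.inr h1
                · rintro (⟨h1, h2⟩ | h1)
                  · exact ⟨Or.inl h1, h2⟩
                  · exact ⟨Or.inr h1, fun hc => hgg (hc.symm.trans h1)⟩
              rw [hset]
              have h1 : v i ((Y j \ {g}) ∪ {g₀}) ≤ v i (Y j \ {g}) + v i {g₀} := hsub _ _ _
              have h2 : v i (Y j \ {g}) ≤ v i (Y j) := hmono _ _ _ (Finset.sdiff_subset)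
              have h3 : v i (Y j) ≤ v i (Y i) := hj i
              have h4 : v i {g₀} ≤ v i (Y i) := hYpool i g₀ hg₀R
              have h5 : v i (Y i) ≤ v i (X' i) := hYle i
              linarith
          · rw [hX'ne k hk] at hg ⊢
            have h1 : v i (Y k \ {g}) ≤ 2 * v i (Y i) := hYefx i k g hg
            have h2 : v i (Y i) ≤ v i (X' i) := hYle i
            linarith
        · intro i g hg
          exact (hYpool i g (Finset.erase_subset _ _ hg)).trans (hYle i)

private lemma construct {n : ℕ} (hn : 0 < n) (M : Finset G) (v : Fin n → Finset G → ℝ)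
    (hv0 : ∀ i A, 0 ≤ v i A) (hnorm : ∀ i, v i ∅ = 0)
    (hmono : ∀ i A B, A ⊆ B → v i A ≤ v i B)
    (hsub : ∀ i A B, v i (A ∪ B) ≤ v i A + v i B)
    (t : Fin n → ℝ) (m0 : Fin n → G)
    (hm0inj : Function.Injective m0) (hm0M : ∀ i, m0 i ∈ M)
    (hm0t : ∀ i, t i ≤ v i {m0 i}) :
    ∃ X : Fin n → Finset G, (∀ i, X i ⊆ M) ∧ (∀ i j, i ≠ j → Disjoint (X i) (X j)) ∧
      (univ.biUnion X = M) ∧ (∀ i, (X i).Nonempty) ∧ (∀ i, t i ≤ v i (X i)) ∧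
      (∀ i j, ∀ g ∈ X j, v i (X j \ {g}) ≤ 2 * v i (X i)) := by
  classical
  set Mt : Finset (Fin n → {x // x ∈ M}) :=
    univ.filter (fun τ => Function.Injective τ ∧ ∀ i, t i ≤ v i {(τ i).1}) with hMt
  have hMtne : Mt.Nonempty := by
    refine ⟨fun i => ⟨m0 i, hm0M i⟩, ?_⟩
    rw [hMt, Finset.mem_filter]
    refine ⟨mem_univ _, ?_, hm0t⟩
    intro a b hab
    exact hm0inj (congrArg Subtype.val hab)
  set key1 : (Fin n → {x // x ∈ M}) → ℝ := fun τ => ∏ i, v i {(τ i).1} with hkey1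
  set key2 : (Fin n → {x // x ∈ M}) → ℝ := fun τ => ∏ i, (v i {(τ i).1} + 1) with hkey2
  obtain ⟨τ₁, hτ₁, hτ₁max⟩ := Finset.exists_max_image Mt key1 hMtne
  have hMt2ne : (Mt.filter (fun τ => key1 τ₁ ≤ key1 τ)).Nonempty :=
    ⟨τ₁, Finset.mem_filter.mpr ⟨hτ₁, le_refl _⟩⟩
  obtain ⟨h, hh, hhmax2⟩ := Finset.exists_max_image _ key2 hMt2ne
  have hhMt : h ∈ Mt := (Finset.mem_filter.mp hh).1
  have hhkey1 : ∀ τ ∈ Mt, key1 τ ≤ key1 h := fun τ hτ =>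
    (hτ₁max τ hτ).trans (Finset.mem_filter.mp hh).2
  obtain ⟨hinj, hts⟩ : Function.Injective h ∧ ∀ i, t i ≤ v i {(h i).1} :=
    (Finset.mem_filter.mp hhMt).2
  set hg : Fin n → G := fun i => (h i).1 with hhg
  have hginj : Function.Injective hg := by
    intro a b hab
    exact hinj (Subtype.ext hab)
  -- pool domination
  have hpool0 : ∀ i : Fin n, ∀ g ∈ M \ univ.image hg, v i {g} ≤ v i {hg i} := by
    intro i g hgmem
    obtain ⟨hgM, hgnot⟩ := Finset.mem_sdiff.mp hgmem
    by_contra hcon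
    push_neg at hcon
    set τ' : Fin n → {x // x ∈ M} := Function.update h i ⟨g, hgM⟩ with hτ'
    have hτ'i : τ' i = ⟨g, hgM⟩ := by rw [hτ']; simp
    have hτ'ne : ∀ k, k ≠ i → τ' k = h k := by
      intro k hk; rw [hτ']; exact Function.update_of_ne hk _ _
    have hτ'Mt : τ' ∈ Mt := by
      rw [hMt, Finset.mem_filter]
      refine ⟨mem_univ _, ?_, ?_⟩
      · intro a b hab
        by_cases ha : a = i <;> by_cases hb : b = i
        · rw [ha, hb]
        · exfalso
          rw [ha, hτ'i, hτ'ne b hb] at hab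
          apply hgnot
          rw [Finset.mem_image]
          exact ⟨b, mem_univ _, ((congrArg Subtype.val hab).symm : (h b).1 = g)⟩
        · exfalso
          rw [hb, hτ'i, hτ'ne a ha] at hab
          apply hgnot
          rw [Finset.mem_image]
          exact ⟨a, mem_univ _, (congrArg Subtype.val hab : (h a).1 = g)⟩
        · rw [hτ'ne a ha, hτ'ne b hb] at hab
          exact hinj hab
      · intro k
        by_cases hk : k = i
        · rw [hk, hτ'i]
          exact (hts i).trans (le_of_lt hcon)
        · rw [hτ'ne k hk]
          exact hts k
    -- product comparisons
    have htail1 : ∏ k ∈ univ.erase i, v k {(τ' k).1} = ∏ k ∈ univ.erase i, v k {(h k).1} :=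
      Finset.prod_congr rfl (fun k hk => by rw [hτ'ne k (Finset.mem_erase.mp hk).1])
    have htail2 : ∏ k ∈ univ.erase i, (v k {(τ' k).1} + 1)
        = ∏ k ∈ univ.erase i, (v k {(h k).1} + 1) :=
      Finset.prod_congr rfl (fun k hk => by rw [hτ'ne k (Finset.mem_erase.mp hk).1])
    have hvti : (τ' i).1 = g := by rw [hτ'i]
    have hsplit1 : key1 τ' = v i {g} * ∏ k ∈ univ.erase i, v k {(h k).1} := by
      have e1 : key1 τ' = v i {(τ' i).1} * ∏ k ∈ univ.erase i, v k {(τ' k).1} :=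
        (Finset.mul_prod_erase univ (fun k => v k {(τ' k).1}) (mem_univ i)).symm
      rw [e1, hvti, htail1]
    have hsplit1h : key1 h = v i {hg i} * ∏ k ∈ univ.erase i, v k {(h k).1} :=
      (Finset.mul_prod_erase univ (fun k => v k {(h k).1}) (mem_univ i)).symm
    have hsplit2 : key2 τ' = (v i {g} + 1) * ∏ k ∈ univ.erase i, (v k {(h k).1} + 1) := by
      have e2 : key2 τ' = (v i {(τ' i).1} + 1) * ∏ k ∈ univ.erase i, (v k {(τ' k).1} + 1) :=
        (Finset.mul_prod_erase univ (fun k => (v k {(τ' k).1} + 1)) (mem_univ i)).symm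
      rw [e2, hvti, htail2]
    have hsplit2h : key2 h = (v i {hg i} + 1) * ∏ k ∈ univ.erase i, (v k {(h k).1} + 1) :=
      (Finset.mul_prod_erase univ (fun k => (v k {(h k).1} + 1)) (mem_univ i)).symm
    have hQ0 : 0 ≤ ∏ k ∈ univ.erase i, v k {(h k).1} :=
      Finset.prod_nonneg (fun k _ => hv0 _ _)
    rcases lt_or_eq_of_le hQ0 with hQpos | hQzero
    · have : key1 h < key1 τ' := by
        rw [hsplit1, hsplit1h]
        exact mul_lt_mul_of_pos_right hcon hQpos
      exact absurd (hhkey1 τ' hτ'Mt) (not_le.mpr this)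
    · have hkey1eq : key1 τ' = key1 h := by
        rw [hsplit1, hsplit1h, ← hQzero, mul_zero, mul_zero]
      have hτ'Mt2 : τ' ∈ Mt.filter (fun τ => key1 τ₁ ≤ key1 τ) := by
        rw [Finset.mem_filter]
        exact ⟨hτ'Mt, le_of_le_of_eq ((Finset.mem_filter.mp hh).2) hkey1eq.symm⟩
      have hQ2pos : 0 < ∏ k ∈ univ.erase i, (v k {(h k).1} + 1) :=
        Finset.prod_pos (fun k _ => by have := hv0 k {(h k).1}; linarith)
      have : key2 h < key2 τ' := by
        rw [hsplit2, hsplit2h]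
        apply mul_lt_mul_of_pos_right _ hQ2pos
        linarith
      exact absurd (hhmax2 τ' hτ'Mt2) (not_le.mpr this)
  -- initial state
  set X0 : Fin n → Finset G := fun i => {hg i} with hX0
  have himsub : univ.image hg ⊆ M := by
    intro a ha
    obtain ⟨i, _, rfl⟩ := Finset.mem_image.mp ha
    exact (h i).2
  have hbi : univ.biUnion X0 = univ.image hg := by
    ext a
    rw [Finset.mem_biUnion, Finset.mem_image]
    constructor
    · rintro ⟨i, hi, hai⟩
      exact ⟨i, hi, (Finset.mem_singleton.mp hai).symm⟩
    · rintro ⟨i, hi, hai⟩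
      exact ⟨i, hi, Finset.mem_singleton.mpr hai.symm⟩
  apply envy_loop hn M v hv0 hmono hsub t (M \ univ.image hg).card (M \ univ.image hg) X0
    (le_refl _) (Finset.sdiff_subset)
  · intro i
    show ({hg i} : Finset G) ⊆ M
    exact Finset.singleton_subset_iff.mpr ((h i).2)
  · intro i
    show Disjoint ({hg i} : Finset G) (M \ univ.image hg)
    simp only [Finset.disjoint_singleton_left, Finset.mem_sdiff, not_and, not_not]
    intro _
    exact Finset.mem_image.mpr ⟨i, mem_univ _, rfl⟩
  · intro i j hij
    show Disjoint ({hg i} : Finset G) ({hg j} : Finset G)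
    simp only [Finset.disjoint_singleton_left, Finset.mem_singleton]
    exact fun hc => hij (hginj hc)
  · rw [hbi, Finset.sdiff_sdiff_eq_self himsub]
  · intro i
    exact ⟨hg i, Finset.mem_singleton_self _⟩
  · intro i
    exact hts i
  · intro i j g hgmem
    have hgj : g = hg j := Finset.mem_singleton.mp hgmem
    show v i (({hg j} : Finset G) \ {g}) ≤ 2 * v i ({hg i} : Finset G)
    rw [hgj, Finset.sdiff_self]
    have h1 := hv0 i ({hg i} : Finset G)
    rw [hnorm i]
    linarith
  · intro i g hgmem
    exact hpool0 i g hgmem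

end EnvyCycle

/-- Main theorem, complete allocation, Nash welfare: For every
`ε ∈ (0, 1/2)` there is a complete `(1/2 - ε)`-EFX allocation `X` whose Nash
welfare is at least `((1 - 2ε)/(8(n+1)))^n` times that of any allocation. -/
theorem main_complete_nash
    {G : Type*} [DecidableEq G]
    (n : ℕ) (hn : 0 < n) (M : Finset G) (hm : n ≤ M.card)
    (v : Fin n → Finset G → ℝ)
    (hv0 : ∀ i A, 0 ≤ v i A)
    (hnorm : ∀ i, v i ∅ = 0)
    (hmono : ∀ i A B, A ⊆ B → v i A ≤ v i B)
    (hsub : ∀ i A B, v i (A ∪ B) ≤ v i A + v i B)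
    (ε : ℝ) (hε0 : 0 < ε) (hε1 : ε < 1 / 2) :
    ∃ X : Fin n → Finset G,
      (∀ i, X i ⊆ M) ∧
      (∀ i j, i ≠ j → Disjoint (X i) (X j)) ∧
      (Finset.univ.biUnion X = M) ∧
      (∀ i j, ∀ g ∈ X j, (1 / 2 - ε) * v i (X j \ {g}) ≤ v i (X i)) ∧
      (∀ Xs : Fin n → Finset G, (∀ i, Xs i ⊆ M) →
        (∀ i j, i ≠ j → Disjoint (Xs i) (Xs j)) →
        ((1 - 2 * ε) / (8 * ((n : ℝ) + 1))) ^ n * ∏ i, v i (Xs i)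
          ≤ ∏ i, v i (X i)) := by
  classical
  set filt : Finset (Fin n → {A : Finset G // A ∈ M.powerset}) :=
    univ.filter (fun Xs => ∀ i j, i ≠ j → Disjoint (Xs i).1 (Xs j).1) with hfilt
  have hfiltne : filt.Nonempty := by
    refine ⟨fun _ => ⟨∅, Finset.mem_powerset.mpr (Finset.empty_subset M)⟩, ?_⟩
    rw [hfilt, Finset.mem_filter]
    exact ⟨mem_univ _, fun i j _ => by simp⟩
  obtain ⟨Xstar, hXstarmem, hXstarmax⟩ :=
    Finset.exists_max_image filt (fun Xs => ∏ i, v i (Xs i).1) hfiltne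
  have hXstarD : ∀ i j, i ≠ j → Disjoint (Xstar i).1 (Xstar j).1 :=
    (Finset.mem_filter.mp hXstarmem).2
  by_cases hP : 0 < ∏ i, v i (Xstar i).1
  · -- positive optimum
    have hposi : ∀ i, 0 < v i (Xstar i).1 := by
      intro i
      rcases lt_or_eq_of_le (hv0 i (Xstar i).1) with hlt | heq
      · exact hlt
      · exfalso
        have : ∏ i, v i (Xstar i).1 = 0 := Finset.prod_eq_zero (mem_univ i) heq.symm
        rw [this] at hP
        exact lt_irrefl _ hP
    have hnei : ∀ i, ((Xstar i).1).Nonempty := by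
      intro i
      rcases Finset.eq_empty_or_nonempty (Xstar i).1 with he | hne
      · exfalso
        have := hposi i
        rw [he, hnorm i] at this
        exact lt_irrefl _ this
      · exact hne
    have hbex : ∀ i, ∃ b ∈ (Xstar i).1, ∀ g ∈ (Xstar i).1, v i {g} ≤ v i {b} :=
      fun i => Finset.exists_max_image _ (fun g => v i {g}) (hnei i)
    choose b hbmem hbmax using hbex
    have hbinj : Function.Injective b := by
      intro i j hij
      by_contra hne2
      exact (Finset.disjoint_left.mp (hXstarD i j hne2)) (hbmem i) (hij ▸ hbmem j)
    have hbM : ∀ i, b i ∈ M := fun i =>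
      (Finset.mem_powerset.mp (Xstar i).2) (hbmem i)
    obtain ⟨X, hXM, hXdisj, hXun, hXne, hXt, hXefx⟩ :=
      construct hn M v hv0 hnorm hmono hsub (fun i => v i {b i}) b hbinj hbM
        (fun i => le_refl _)
    refine ⟨X, hXM, hXdisj, hXun, ?_, ?_⟩
    · intro i j g hg
      have h1 := hXefx i j g hg
      have h2 := hv0 i (X j \ {g})
      have h3 : 0 ≤ ε * v i (X j \ {g}) := mul_nonneg hε0.le h2
      nlinarith
    · intro Xs hXs1 hXs2
      have hmem : (fun i => (⟨Xs i, Finset.mem_powerset.mpr (hXs1 i)⟩ :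
          {A : Finset G // A ∈ M.powerset})) ∈ filt := by
        rw [hfilt, Finset.mem_filter]
        exact ⟨mem_univ _, fun i j hij => hXs2 i j hij⟩
      have hle1 : ∏ i, v i (Xs i) ≤ ∏ i, v i (Xstar i).1 := hXstarmax _ hmem
      have hkey : ∀ i, v i (Xstar i).1 ≤ (3 * (n:ℝ)) * v i (X i) := by
        intro i
        have hsubM : (Xstar i).1 ⊆ M := Finset.mem_powerset.mp (Xstar i).2
        have hdec : (Xstar i).1 = univ.biUnion (fun k => (Xstar i).1 ∩ X k) := by
          ext a
          constructor
          · intro ha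
            have haM : a ∈ M := hsubM ha
            rw [← hXun] at haM
            obtain ⟨k, _, hak⟩ := Finset.mem_biUnion.mp haM
            exact Finset.mem_biUnion.mpr ⟨k, mem_univ _, Finset.mem_inter.mpr ⟨ha, hak⟩⟩
          · intro ha
            obtain ⟨k, _, hak⟩ := Finset.mem_biUnion.mp ha
            exact (Finset.mem_inter.mp hak).1
        have hterm : ∀ k, v i ((Xstar i).1 ∩ X k) ≤ 3 * v i (X i) := by
          intro k
          obtain ⟨s, hs⟩ := hXne k
          have hefxk : v i (X k \ {s}) ≤ 2 * v i (X i) := hXefx i k s hs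
          have h0 : 0 ≤ v i (X i) := hv0 _ _
          by_cases hsx : s ∈ (Xstar i).1
          · have hss : (Xstar i).1 ∩ X k ⊆ (X k \ {s}) ∪ {s} := by
              intro a ha
              obtain ⟨ha1, ha2⟩ := Finset.mem_inter.mp ha
              by_cases has : a = s
              · exact Finset.mem_union.mpr (Or.inr (Finset.mem_singleton.mpr has))
              · exact Finset.mem_union.mpr
                  (Or.inl (Finset.mem_sdiff.mpr ⟨ha2, by simpa using has⟩))
            have hbnd : v i {s} ≤ v i (X i) := (hbmax i s hsx).trans (hXt i)
            calc v i ((Xstar i).1 ∩ X k) ≤ v i ((X k \ {s}) ∪ {s}) := hmono _ _ _ hss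
              _ ≤ v i (X k \ {s}) + v i {s} := hsub _ _ _
              _ ≤ 2 * v i (X i) + v i (X i) := add_le_add hefxk hbnd
              _ = 3 * v i (X i) := by ring
          · have hss : (Xstar i).1 ∩ X k ⊆ X k \ {s} := by
              intro a ha
              obtain ⟨ha1, ha2⟩ := Finset.mem_inter.mp ha
              refine Finset.mem_sdiff.mpr ⟨ha2, ?_⟩
              simp only [Finset.mem_singleton]
              intro hc
              exact hsx (hc ▸ ha1)
            calc v i ((Xstar i).1 ∩ X k) ≤ v i (X k \ {s}) := hmono _ _ _ hss
              _ ≤ 2 * v i (X i) := hefxk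
              _ ≤ 3 * v i (X i) := by linarith
        calc v i (Xstar i).1
            = v i (univ.biUnion (fun k => (Xstar i).1 ∩ X k)) := by rw [← hdec]
          _ ≤ ∑ k, v i ((Xstar i).1 ∩ X k) :=
              subadd_biUnion (v i) (hnorm i) (hsub i) (hmono i) univ _
          _ ≤ ∑ _k : Fin n, 3 * v i (X i) := Finset.sum_le_sum (fun k _ => hterm k)
          _ = (n:ℝ) * (3 * v i (X i)) := by
              rw [Finset.sum_const, card_univ, Fintype.card_fin, nsmul_eq_mul]
          _ = (3 * (n:ℝ)) * v i (X i) := by ring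
      set c : ℝ := (1 - 2*ε) / (8 * ((n:ℝ)+1)) with hc
      have hden : (0:ℝ) < 8 * ((n:ℝ)+1) := by positivity
      have hc0 : 0 ≤ c := by
        rw [hc]
        apply div_nonneg _ hden.le
        linarith
      have hcn : c * (3 * (n:ℝ)) ≤ 1 := by
        rw [hc, div_mul_eq_mul_div, div_le_one hden]
        have h1 : (0:ℝ) ≤ 3 * (n:ℝ) := by positivity
        nlinarith
      have h3 : ∀ i, c * v i (Xstar i).1 ≤ v i (X i) := by
        intro i
        have h4 := mul_le_mul_of_nonneg_left (hkey i) hc0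
        have h6 : (c * (3 * (n:ℝ))) * v i (X i) ≤ 1 * v i (X i) :=
          mul_le_mul_of_nonneg_right hcn (hv0 _ _)
        nlinarith
      calc c ^ n * ∏ i, v i (Xs i)
          ≤ c ^ n * ∏ i, v i (Xstar i).1 :=
            mul_le_mul_of_nonneg_left hle1 (pow_nonneg hc0 n)
        _ = ∏ i, (c * v i (Xstar i).1) := by
            rw [Finset.prod_mul_distrib, Finset.prod_const, card_univ, Fintype.card_fin]
        _ ≤ ∏ i, v i (X i) :=
            Finset.prod_le_prod (fun i _ => mul_nonneg hc0 (hv0 _ _)) (fun i _ => h3 i)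
  · -- zero optimum
    obtain ⟨s, hsM, hscard⟩ := Finset.exists_subset_card_eq hm
    set e := s.equivFinOfCardEq hscard with he
    set m0 : Fin n → G := fun i => (e.symm i).1 with hm0
    have hm0inj : Function.Injective m0 := by
      intro a b hab
      have : e.symm a = e.symm b := Subtype.ext hab
      exact e.symm.injective this
    have hm0M : ∀ i, m0 i ∈ M := fun i => hsM (e.symm i).2
    obtain ⟨X, hXM, hXdisj, hXun, hXne, hXt, hXefx⟩ :=
      construct hn M v hv0 hnorm hmono hsub (fun _ => (0:ℝ)) m0 hm0inj hm0M
        (fun i => hv0 _ _)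
    refine ⟨X, hXM, hXdisj, hXun, ?_, ?_⟩
    · intro i j g hg
      have h1 := hXefx i j g hg
      have h2 := hv0 i (X j \ {g})
      have h3 : 0 ≤ ε * v i (X j \ {g}) := mul_nonneg hε0.le h2
      nlinarith
    · intro Xs hXs1 hXs2
      have hmem : (fun i => (⟨Xs i, Finset.mem_powerset.mpr (hXs1 i)⟩ :
          {A : Finset G // A ∈ M.powerset})) ∈ filt := by
        rw [hfilt, Finset.mem_filter]
        exact ⟨mem_univ _, fun i j hij => hXs2 i j hij⟩
      have hle1 : ∏ i, v i (Xs i) ≤ ∏ i, v i (Xstar i).1 := hXstarmax _ hmem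
      have hzero : ∏ i, v i (Xs i) = 0 := by
        have hge : 0 ≤ ∏ i, v i (Xs i) := Finset.prod_nonneg (fun i _ => hv0 _ _)
        have hle : ∏ i, v i (Xs i) ≤ 0 := hle1.trans (not_lt.mp hP)
        linarith
      rw [hzero, mul_zero]
      exact Finset.prod_nonneg (fun i _ => hv0 _ _)
end

section
/- (Main theorem, bounded charity, egalitarian welfare p = −∞.) For every ε with 0 < ε < 1 there exists a partial allocation X = (X_1,…,X_n) of M with charity P = M \ (X_1 ∪ … ∪ X_n) such that: (a) X is (1 − ε)-EFX; (b) |P| < n; (c) v_i(X_i) ≥ v_i(P) for every agent i; and (d) for every allocation X* = (X*_1,…,X*_n) of pairwise disjoint subsets of M, min_i v_i(X_i) ≥ ( (1 − ε)/(4(n+1)) ) · min_i v_i(X*_i). -/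
open Finset

section CharityHelpers

variable {G : Type*} [DecidableEq G]

/-- Subadditivity over a finite union of bundles. -/
private lemma val_biUnion_le {n : ℕ} (v : Finset G → ℝ)
    (hnorm : v ∅ = 0)
    (hsub : ∀ A B : Finset G, v (A ∪ B) ≤ v A + v B)
    (s : Finset (Fin n)) (f : Fin n → Finset G) :
    v (s.biUnion f) ≤ ∑ j ∈ s, v (f j) := by
  classical
  induction s using Finset.induction_on with
  | empty => simp [hnorm]
  | @insert a s ha ih =>
      rw [Finset.biUnion_insert, Finset.sum_insert ha]
      exact le_trans (hsub _ _) (by linarith)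

/-- Existence of a minimum-cardinality "envied" subset of a set `B`:
it is envied by some agent `k`, and removing any single element makes it
unenvied by everybody. -/
private lemma exists_min_envied {n : ℕ} (v : Fin n → Finset G → ℝ)
    (X : Fin n → Finset G) (B : Finset G)
    (hex : ∃ k : Fin n, ∃ Z ⊆ B, v k (X k) < v k Z) :
    ∃ Z : Finset G, ∃ k : Fin n, Z ⊆ B ∧ v k (X k) < v k Z ∧
      ∀ e : Fin n, ∀ h ∈ Z, v e (Z \ {h}) ≤ v e (X e) := by
  classical
  obtain ⟨k₀, Z₀, hZ₀B, hk₀⟩ := hex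
  set S : Finset (Finset G) :=
    B.powerset.filter (fun Z => ∃ e : Fin n, v e (X e) < v e Z) with hS
  have hSne : S.Nonempty := ⟨Z₀, by
    simp only [hS, Finset.mem_filter, Finset.mem_powerset]
    exact ⟨hZ₀B, k₀, hk₀⟩⟩
  obtain ⟨Z, hZS, hZmin⟩ := S.exists_min_image Finset.card hSne
  simp only [hS, Finset.mem_filter, Finset.mem_powerset] at hZS
  obtain ⟨hZB, k, hk⟩ := hZS
  refine ⟨Z, k, hZB, hk, ?_⟩
  intro e h hhZ
  by_contra hlt
  push_neg at hlt
  have hmem : Z \ {h} ∈ S := by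
    simp only [hS, Finset.mem_filter, Finset.mem_powerset]
    exact ⟨(Finset.sdiff_subset).trans hZB, e, hlt⟩
  have hcard : (Z \ {h}).card < Z.card :=
    Finset.card_lt_card (Finset.sdiff_ssubset (by simpa using hhZ) (by simp))
  exact absurd (hZmin _ hmem) (by omega)

end CharityHelpers

/-- Main theorem, bounded charity, egalitarian welfare: For
every `ε ∈ (0, 1)` there is a partial `(1 - ε)`-EFX allocation `X` with
charity `P = M \ (X₁ ∪ … ∪ Xₙ)` such that `|P| < n`, `v i (X i) ≥ v i P` for
every agent, and the egalitarian welfare of `X` is at least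
`(1 - ε)/(4(n+1))` times that of any allocation. -/
theorem main_charity_egalitarian
    {G : Type*} [DecidableEq G]
    (n : ℕ) (hn : 0 < n) (M : Finset G) (hm : n ≤ M.card)
    (v : Fin n → Finset G → ℝ)
    (hv0 : ∀ i A, 0 ≤ v i A)
    (hnorm : ∀ i, v i ∅ = 0)
    (hmono : ∀ i A B, A ⊆ B → v i A ≤ v i B)
    (hsub : ∀ i A B, v i (A ∪ B) ≤ v i A + v i B)
    (ε : ℝ) (hε0 : 0 < ε) (hε1 : ε < 1) :
    ∃ X : Fin n → Finset G,
      (∀ i, X i ⊆ M) ∧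
      (∀ i j, i ≠ j → Disjoint (X i) (X j)) ∧
      (∀ i j, ∀ g ∈ X j, (1 - ε) * v i (X j \ {g}) ≤ v i (X i)) ∧
      ((M \ Finset.univ.biUnion X).card < n) ∧
      (∀ i, v i (M \ Finset.univ.biUnion X) ≤ v i (X i)) ∧
      (∀ Xs : Fin n → Finset G, (∀ i, Xs i ⊆ M) →
        (∀ i j, i ≠ j → Disjoint (Xs i) (Xs j)) →
        ((1 - ε) / (4 * ((n : ℝ) + 1))) *
            Finset.univ.inf' ⟨⟨0, hn⟩, Finset.mem_univ _⟩ (fun i => v i (Xs i))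
          ≤ Finset.univ.inf' ⟨⟨0, hn⟩, Finset.mem_univ _⟩ (fun i => v i (X i))) := by
  classical
  have hune : (Finset.univ : Finset (Fin n)).Nonempty := ⟨⟨0, hn⟩, Finset.mem_univ _⟩
  -- the finite set of all partial allocations
  set cand0 : Finset (Fin n → Finset G) :=
    (Fintype.piFinset (fun _ : Fin n => M.powerset)).filter
      (fun X => ∀ i j, i ≠ j → Disjoint (X i) (X j)) with hcand0
  have hmem_cand0 : ∀ X : Fin n → Finset G,
      X ∈ cand0 ↔ (∀ i, X i ⊆ M) ∧ (∀ i j, i ≠ j → Disjoint (X i) (X j)) := by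
    intro X
    simp [hcand0, Fintype.mem_piFinset, Finset.mem_powerset]
  have hcand0ne : cand0.Nonempty :=
    ⟨fun _ => ∅, (hmem_cand0 _).2 ⟨fun _ => Finset.empty_subset M,
      fun _ _ _ => Finset.disjoint_empty_left _⟩⟩
  -- egalitarian welfare and an optimal allocation Y
  set W : (Fin n → Finset G) → ℝ :=
    fun X => Finset.univ.inf' hune (fun i => v i (X i)) with hW
  obtain ⟨Y, hYmem, hYmax⟩ := cand0.exists_max_image W hcand0ne
  obtain ⟨hYsub, hYdisj⟩ := (hmem_cand0 Y).1 hYmem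
  have hOPT0 : 0 ≤ W Y :=
    Finset.le_inf' hune _ (fun i _ => hv0 i (Y i))
  have hOPT_le : ∀ i, W Y ≤ v i (Y i) := fun i => Finset.inf'_le _ (Finset.mem_univ i)
  set σ : ℝ := W Y / (2 * n) with hσdef
  have hn' : (0:ℝ) < n := by exact_mod_cast hn
  have hσ0 : 0 ≤ σ := by rw [hσdef]; positivity
  -- the best single good of each optimal bundle
  have hbest : ∀ i : Fin n, (Y i).Nonempty → ∃ g ∈ Y i, ∀ g' ∈ Y i, v i {g'} ≤ v i {g} :=
    fun i h => (Y i).exists_max_image (fun g => v i {g}) h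
  choose bg hbg_mem hbg_max using hbest
  -- invariant set: exact EFX + richness
  set cand : Finset (Fin n → Finset G) := cand0.filter
    (fun X => (∀ i j : Fin n, ∀ h ∈ X j, v i (X j \ {h}) ≤ v i (X i)) ∧
      (∀ i (hne : (Y i).Nonempty), σ < v i {bg i hne} → v i {bg i hne} ≤ v i (X i))) with hcand
  have hmem_cand : ∀ X : Fin n → Finset G,
      X ∈ cand ↔ ((∀ i, X i ⊆ M) ∧ (∀ i j, i ≠ j → Disjoint (X i) (X j))) ∧
        (∀ i j : Fin n, ∀ h ∈ X j, v i (X j \ {h}) ≤ v i (X i)) ∧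
        (∀ i (hne : (Y i).Nonempty), σ < v i {bg i hne} → v i {bg i hne} ≤ v i (X i)) := by
    intro X
    rw [hcand, Finset.mem_filter, hmem_cand0]
  have hcandne : cand.Nonempty := by
    set X0 : Fin n → Finset G := fun i =>
      if hne : (Y i).Nonempty then (if σ < v i {bg i hne} then {bg i hne} else ∅) else ∅ with hX0
    have hX0cases : ∀ i, X0 i = ∅ ∨ ∃ hne : (Y i).Nonempty,
        σ < v i {bg i hne} ∧ X0 i = {bg i hne} := by
      intro i
      by_cases hne : (Y i).Nonempty
      · by_cases hσ : σ < v i {bg i hne}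
        · exact Or.inr ⟨hne, hσ, by simp [hX0, hne, hσ]⟩
        · exact Or.inl (by simp [hX0, hne, hσ])
      · exact Or.inl (by simp [hX0, hne])
    have hX0sub : ∀ i, X0 i ⊆ Y i := by
      intro i
      rcases hX0cases i with h | ⟨hne, _, h⟩
      · simp [h]
      · rw [h]; exact Finset.singleton_subset_iff.2 (hbg_mem i hne)
    refine ⟨X0, (hmem_cand X0).2 ⟨⟨fun i => (hX0sub i).trans (hYsub i), ?_⟩, ?_, ?_⟩⟩
    · intro i j hij
      exact Finset.disjoint_of_subset_left (hX0sub i)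
        (Finset.disjoint_of_subset_right (hX0sub j) (hYdisj i j hij))
    · intro i j h hh
      rcases hX0cases j with hc | ⟨hne, _, hc⟩
      · rw [hc] at hh; simp at hh
      · rw [hc] at hh ⊢
        simp only [Finset.mem_singleton] at hh
        subst hh
        rw [Finset.sdiff_self]
        rw [hnorm i]
        exact hv0 i (X0 i)
    · intro i hne hσi
      rcases hX0cases i with hc | ⟨hne', hσ', hc⟩
      · exfalso
        have : X0 i = {bg i hne} := by simp [hX0, hne, hσi]
        rw [hc] at this
        exact Finset.singleton_ne_empty _ this.symm
      · rw [hc]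
  -- extremal allocation
  set Φ : (Fin n → Finset G) → ℝ := fun X => ∑ i, v i (X i) with hΦ
  set sz : (Fin n → Finset G) → ℕ := fun X => ∑ i, (X i).card with hsz
  obtain ⟨X₁, hX₁mem, hX₁max⟩ := cand.exists_max_image Φ hcandne
  obtain ⟨X, hXmem2, hXsz⟩ := (cand.filter (fun X' => Φ X₁ ≤ Φ X')).exists_max_image sz
      ⟨X₁, Finset.mem_filter.2 ⟨hX₁mem, le_refl _⟩⟩
  rw [Finset.mem_filter] at hXmem2
  obtain ⟨hXmem, hX₁X⟩ := hXmem2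
  have hΦmax : ∀ X' ∈ cand, Φ X' ≤ Φ X := fun X' h => (hX₁max X' h).trans hX₁X
  have hszmax : ∀ X' ∈ cand, Φ X ≤ Φ X' → sz X' ≤ sz X := by
    intro X' h hφ
    exact hXsz X' (Finset.mem_filter.2 ⟨h, le_trans hX₁X hφ⟩)
  obtain ⟨⟨hXsub, hXdisj⟩, hXefx, hXrich⟩ := (hmem_cand X).1 hXmem
  set P : Finset G := M \ Finset.univ.biUnion X with hPdef
  have hPM : P ⊆ M := by rw [hPdef]; exact Finset.sdiff_subset
  have hPdisj : ∀ w, Disjoint P (X w) := by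
    intro w
    refine Finset.disjoint_left.2 (fun g hgP hgX => ?_)
    rw [hPdef, Finset.mem_sdiff] at hgP
    exact hgP.2 (Finset.mem_biUnion.2 ⟨w, Finset.mem_univ w, hgX⟩)
  -- single-agent update stays in the invariant set
  have hupd : ∀ (k : Fin n) (Z : Finset G), Z ⊆ M → (∀ j, j ≠ k → Disjoint Z (X j)) →
      (∀ e : Fin n, ∀ h ∈ Z, v e (Z \ {h}) ≤ v e (X e)) → v k (X k) ≤ v k Z →
      Function.update X k Z ∈ cand := by
    intro k Z hZM hZdisj htight hkZ
    have hown : ∀ e, v e (X e) ≤ v e (Function.update X k Z e) := by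
      intro e
      by_cases he : e = k
      · subst he; rw [Function.update_self]; exact hkZ
      · rw [Function.update_of_ne he]
    have hbundle : ∀ (i j : Fin n), ∀ h ∈ Function.update X k Z j,
        v i (Function.update X k Z j \ {h}) ≤ v i (X i) := by
      intro i j h hh
      by_cases hj : j = k
      · subst hj
        rw [Function.update_self] at hh ⊢
        exact htight i h hh
      · rw [Function.update_of_ne hj] at hh ⊢
        exact hXefx i j h hh
    refine (hmem_cand _).2 ⟨⟨?_, ?_⟩, ?_, ?_⟩
    · intro i
      by_cases hi : i = k
      · subst hi; rw [Function.update_self]; exact hZM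
      · rw [Function.update_of_ne hi]; exact hXsub i
    · intro i j hij
      by_cases hi : i = k
      · subst hi
        rw [Function.update_self, Function.update_of_ne (Ne.symm hij)]
        exact hZdisj j (Ne.symm hij)
      · by_cases hj : j = k
        · subst hj
          rw [Function.update_self, Function.update_of_ne hi]
          exact (hZdisj i hi).symm
        · rw [Function.update_of_ne hi, Function.update_of_ne hj]
          exact hXdisj i j hij
    · intro i j h hh
      exact le_trans (hbundle i j h hh) (hown i)
    · intro i hne hσi
      exact le_trans (hXrich i hne hσi) (hown i)
  -- Fact 1 : nobody envies any part of the charity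
  have fact1 : ∀ (e : Fin n) (Z : Finset G), Z ⊆ P → v e Z ≤ v e (X e) := by
    by_contra hcon
    push_neg at hcon
    obtain ⟨e, Z, hZP, hlt⟩ := hcon
    obtain ⟨Z₀, k, hZ₀, hk, htight⟩ := exists_min_envied v X P ⟨e, Z, hZP, hlt⟩
    have hmem := hupd k Z₀ (hZ₀.trans hPM)
      (fun j _ => Finset.disjoint_of_subset_left hZ₀ (hPdisj j)) htight (le_of_lt hk)
    have hgain : Φ X < Φ (Function.update X k Z₀) := by
      rw [hΦ]
      refine Finset.sum_lt_sum (fun i _ => ?_) ⟨k, Finset.mem_univ k, ?_⟩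
      · by_cases hi : i = k
        · subst hi; rw [Function.update_self]; exact le_of_lt hk
        · rw [Function.update_of_ne hi]
      · rw [Function.update_self]; exact hk
    exact absurd (hΦmax _ hmem) (not_le.2 hgain)
  -- all dumps are blocked at the extremal allocation
  have hblock : ∀ (t : Fin n), ∀ g ∈ P, ∃ i : Fin n, ∃ h ∈ X t ∪ {g},
      v i (X i) < v i ((X t ∪ {g}) \ {h}) := by
    intro t g hgP
    by_contra hcon
    push_neg at hcon
    have hgM : g ∈ M := hPM hgP
    have hgX : ∀ w, g ∉ X w := fun w hw => Finset.disjoint_left.1 (hPdisj w) hgP hw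
    have hdisj' : ∀ j, j ≠ t → Disjoint (X t ∪ {g}) (X j) := by
      intro j hj
      rw [Finset.disjoint_union_left]
      exact ⟨hXdisj t j (fun h => hj h.symm), by
        simp only [Finset.disjoint_singleton_left]; exact hgX j⟩
    have hmem := hupd t (X t ∪ {g})
      (Finset.union_subset (hXsub t) (by simpa using hgM)) hdisj'
      (fun e h hh => hcon e h hh) (hmono t _ _ Finset.subset_union_left)
    set X' := Function.update X t (X t ∪ {g}) with hX'
    have hown : ∀ e, v e (X e) ≤ v e (X' e) := by
      intro e
      by_cases he : e = t
      · subst he; rw [hX', Function.update_self]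
        exact hmono e _ _ Finset.subset_union_left
      · rw [hX', Function.update_of_ne he]
    have hφle : Φ X ≤ Φ X' := by
      rw [hΦ]; exact Finset.sum_le_sum (fun i _ => hown i)
    have hszlt : sz X < sz X' := by
      rw [hsz]
      refine Finset.sum_lt_sum (fun i _ => ?_) ⟨t, Finset.mem_univ t, ?_⟩
      · by_cases hi : i = t
        · subst hi; rw [hX', Function.update_self]
          exact Finset.card_le_card Finset.subset_union_left
        · rw [hX', Function.update_of_ne hi]
      · rw [hX', Function.update_self]
        refine Finset.card_lt_card ⟨Finset.subset_union_left, fun hsub => ?_⟩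
        exact hgX t (hsub (Finset.mem_union_right _ (Finset.mem_singleton_self g)))
    exact absurd (hszmax X' hmem hφle) (not_le.2 hszlt)
  -- Fact 2 : small charity
  have fact2 : P.card < n := by
    by_contra hge
    push_neg at hge
    obtain ⟨Q, hQP, hQn⟩ := Finset.exists_subset_card_eq hge
    -- enumerate n distinct pool goods
    set q : Fin n → G := fun l => ((Q.equivFinOfCardEq hQn).symm l : G) with hqdef
    have hqQ : ∀ l, q l ∈ Q := fun l => ((Q.equivFinOfCardEq hQn).symm l).2
    have hqP : ∀ l, q l ∈ P := fun l => hQP (hqQ l)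
    have hqinj : Function.Injective q := fun a b hab =>
      (Q.equivFinOfCardEq hQn).symm.injective (Subtype.ext hab)
    -- flattened pool-good sequence
    set qn : ℕ → G := fun l => if h : l < n then q ⟨l, h⟩ else q ⟨0, hn⟩ with hqndef
    have hqnP : ∀ l, l < n → qn l ∈ P := by
      intro l hl; rw [hqndef]; simp only [dif_pos hl]; exact hqP _
    have hqninj : ∀ a b, a < n → b < n → qn a = qn b → a = b := by
      intro a b ha hb heq
      rw [hqndef] at heq
      simp only [dif_pos ha, dif_pos hb] at heq
      have := hqinj heq
      exact Fin.mk.inj_iff.1 this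
    -- champion data for each (agent, pool good)
    have champ : ∀ (t : Fin n) (l : Fin n), ∃ k : Fin n, ∃ Z : Finset G,
        Z ⊆ X t ∪ {q l} ∧ v k (X k) < v k Z ∧
        ∀ e : Fin n, ∀ h ∈ Z, v e (Z \ {h}) ≤ v e (X e) := by
      intro t l
      obtain ⟨i, h, _, hlt⟩ := hblock t (q l) (hqP l)
      obtain ⟨Z, k, hZ, hk, htight⟩ := exists_min_envied v X (X t ∪ {q l})
        ⟨i, (X t ∪ {q l}) \ {h}, Finset.sdiff_subset, hlt⟩
      exact ⟨k, Z, hZ, hk, htight⟩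
    choose K ZF hZF_sub hZF_envy hZF_tight using champ
    -- the champion chain
    obtain ⟨T, hT0, hTsucc⟩ : ∃ T : ℕ → Fin n, T 0 = ⟨0, hn⟩ ∧
        ∀ l, T (l + 1) = if h : l < n then K (T l) ⟨l, h⟩ else T l :=
      ⟨fun l => Nat.rec ⟨0, hn⟩ (fun l' t => if h : l' < n then K t ⟨l', h⟩ else t) l,
        rfl, fun l => rfl⟩
    -- flattened bundle sequence
    set ZL : ℕ → Finset G := fun l => if h : l < n then ZF (T l) ⟨l, h⟩ else ∅ with hZLdef
    have hZLsub : ∀ l, l < n → ZL l ⊆ X (T l) ∪ {qn l} := by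
      intro l hl
      rw [hZLdef, hqndef]
      simp only [dif_pos hl]
      exact hZF_sub _ _
    have hZLenvy : ∀ l, l < n → v (T (l+1)) (X (T (l+1))) < v (T (l+1)) (ZL l) := by
      intro l hl
      rw [hZLdef]
      simp only [dif_pos hl]
      rw [hTsucc l]
      simp only [dif_pos hl]
      exact hZF_envy _ _
    have hZLtight : ∀ l, l < n → ∀ e : Fin n, ∀ h ∈ ZL l, v e (ZL l \ {h}) ≤ v e (X e) := by
      intro l hl
      rw [hZLdef]
      simp only [dif_pos hl]
      exact hZF_tight _ _
    -- pigeonhole : a repeated agent among T 0, ..., T n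
    have hpigeon : ∃ a b : Fin (n + 1), a ≠ b ∧ T ↑a = T ↑b := by
      have hcard : Fintype.card (Fin n) < Fintype.card (Fin (n + 1)) := by simp
      obtain ⟨a, b, hab, h⟩ :=
        Fintype.exists_ne_map_eq_of_card_lt (fun l : Fin (n+1) => T ↑l) hcard
      exact ⟨a, b, hab, h⟩
    -- minimal-gap repeated pair
    set Pairs : Finset (ℕ × ℕ) := ((Finset.range (n+1)) ×ˢ (Finset.range (n+1))).filter
        (fun p => p.1 < p.2 ∧ T p.1 = T p.2) with hPairsdef
    have hPairsne : Pairs.Nonempty := by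
      obtain ⟨a, b, hab, heq⟩ := hpigeon
      have hab' : (a : ℕ) ≠ (b : ℕ) := fun h => hab (Fin.ext h)
      rcases Nat.lt_or_ge (a : ℕ) (b : ℕ) with h | h
      · exact ⟨((a : ℕ), (b : ℕ)), by
          rw [hPairsdef, Finset.mem_filter, Finset.mem_product]
          exact ⟨⟨Finset.mem_range.2 a.isLt, Finset.mem_range.2 b.isLt⟩, h, heq⟩⟩
      · have h' : (b : ℕ) < (a : ℕ) := by omega
        exact ⟨((b : ℕ), (a : ℕ)), by
          rw [hPairsdef, Finset.mem_filter, Finset.mem_product]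
          exact ⟨⟨Finset.mem_range.2 b.isLt, Finset.mem_range.2 a.isLt⟩, h', heq.symm⟩⟩
    obtain ⟨pr, hprmem, hprmin⟩ := Pairs.exists_min_image (fun p => p.2 - p.1) hPairsne
    rw [hPairsdef, Finset.mem_filter, Finset.mem_product] at hprmem
    obtain ⟨⟨_, hr2⟩, hjr, hTjr⟩ := hprmem
    set j := pr.1 with hjdef
    set r := pr.2 with hrdef
    have hrn : r ≤ n := by
      have := Finset.mem_range.1 hr2; omega
    -- injectivity of T on [j+1, r]
    have hinj : ∀ a b : ℕ, j + 1 ≤ a → a ≤ r → j + 1 ≤ b → b ≤ r → T a = T b → a = b := by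
      intro a b ha1 ha2 hb1 hb2 heq
      by_contra hne
      have hmem : ∀ c d : ℕ, c < d → d ≤ n → T c = T d → (c, d) ∈ Pairs := by
        intro c d hcd hdn hT
        rw [hPairsdef, Finset.mem_filter, Finset.mem_product]
        exact ⟨⟨Finset.mem_range.2 (by omega), Finset.mem_range.2 (by omega)⟩, hcd, hT⟩
      rcases Nat.lt_or_ge a b with h | h
      · have := hprmin _ (hmem a b h (by omega) heq); omega
      · have hba : b < a := by omega
        have := hprmin _ (hmem b a hba (by omega) heq.symm); omega
    -- distinctness of T on [j, r-1]
    have hTne : ∀ a b : ℕ, j ≤ a → a < r → j ≤ b → b < r → a ≠ b → T a ≠ T b := by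
      intro a b ha1 ha2 hb1 hb2 hne heq
      rcases Nat.eq_or_lt_of_le ha1 with haj | haj
      · -- a = j
        have hb1' : j + 1 ≤ b := by omega
        have : T r = T b := by rw [← hTjr, haj]; exact heq
        have := hinj r b (by omega) (le_refl r) hb1' (by omega) this
        omega
      · rcases Nat.eq_or_lt_of_le hb1 with hbj | hbj
        · have ha1' : j + 1 ≤ a := by omega
          have : T a = T r := by rw [← hTjr, hbj]; exact heq
          have := hinj a r ha1' (by omega) (by omega) (le_refl r) this
          omega
        · exact hne (hinj a b (by omega) (by omega) (by omega) (by omega) heq)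
  
    -- the reassigned agents
    set RA : Finset (Fin n) := (Finset.Ico j r).image (fun l => T (l + 1)) with hRAdef
    set X' : Fin n → Finset G := fun w =>
      if w ∈ RA then ((Finset.Ico j r).filter (fun l => T (l + 1) = w)).biUnion ZL
      else X w with hX'def
    have huniq : ∀ l ∈ Finset.Ico j r, ∀ l' ∈ Finset.Ico j r, T (l+1) = T (l'+1) → l = l' := by
      intro l hl l' hl' heq
      rw [Finset.mem_Ico] at hl hl'
      have := hinj (l+1) (l'+1) (by omega) (by omega) (by omega) (by omega) heq
      omega
    have hX'for : ∀ l ∈ Finset.Ico j r, X' (T (l + 1)) = ZL l := by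
      intro l hl
      have hmem : T (l+1) ∈ RA := by rw [hRAdef]; exact Finset.mem_image.2 ⟨l, hl, rfl⟩
      simp only [hX'def]
      rw [if_pos hmem]
      have hfil : (Finset.Ico j r).filter (fun l' => T (l' + 1) = T (l + 1)) = {l} := by
        apply Finset.eq_singleton_iff_unique_mem.2
        refine ⟨Finset.mem_filter.2 ⟨hl, rfl⟩, ?_⟩
        intro l' hl'
        rw [Finset.mem_filter] at hl'
        exact huniq l' hl'.1 l hl hl'.2
      rw [hfil, Finset.singleton_biUnion]
    have hX'keep : ∀ w, w ∉ RA → X' w = X w := by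
      intro w hw
      simp only [hX'def]
      rw [if_neg hw]
    have hRAmem : ∀ w ∈ RA, ∃ l, l ∈ Finset.Ico j r ∧ T (l+1) = w := by
      intro w hw
      rw [hRAdef] at hw
      obtain ⟨l, hl, hlw⟩ := Finset.mem_image.1 hw
      exact ⟨l, hl, hlw⟩
    have hln : ∀ l ∈ Finset.Ico j r, l < n := by
      intro l hl
      rw [Finset.mem_Ico] at hl
      omega
    have hTmemRA : ∀ l ∈ Finset.Ico j r, T l ∈ RA := by
      intro l hl
      rw [Finset.mem_Ico] at hl
      rcases Nat.eq_or_lt_of_le hl.1 with hlj | hlj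
      · rw [hRAdef]
        refine Finset.mem_image.2 ⟨r - 1, Finset.mem_Ico.2 ⟨by omega, by omega⟩, ?_⟩
        have hr1 : r - 1 + 1 = r := by omega
        rw [hr1, ← hTjr, hlj]
      · rw [hRAdef]
        refine Finset.mem_image.2 ⟨l - 1, Finset.mem_Ico.2 ⟨by omega, by omega⟩, ?_⟩
        have hl1 : l - 1 + 1 = l := by omega
        rw [hl1]
    have hX'own : ∀ e, v e (X e) ≤ v e (X' e) := by
      intro e
      by_cases he : e ∈ RA
      · obtain ⟨l, hl, hle⟩ := hRAmem e he
        rw [← hle, hX'for l hl]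
        exact le_of_lt (hZLenvy l (hln l hl))
      · rw [hX'keep e he]
    have hX'sub : ∀ w, X' w ⊆ M := by
      intro w
      by_cases hw : w ∈ RA
      · obtain ⟨l, hl, hlw⟩ := hRAmem w hw
        rw [← hlw, hX'for l hl]
        refine (hZLsub l (hln l hl)).trans (Finset.union_subset (hXsub _) ?_)
        simpa using hPM (hqnP l (hln l hl))
      · rw [hX'keep w hw]; exact hXsub w
    have hZLdisjX : ∀ l ∈ Finset.Ico j r, ∀ w, w ∉ RA → Disjoint (ZL l) (X w) := by
      intro l hl w hw
      refine Finset.disjoint_of_subset_left (hZLsub l (hln l hl)) ?_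
      rw [Finset.disjoint_union_left]
      constructor
      · refine hXdisj _ _ (fun hTw => hw ?_)
        rw [← hTw]
        exact hTmemRA l hl
      · simp only [Finset.disjoint_singleton_left]
        exact fun hmem => Finset.disjoint_left.1 (hPdisj w) (hqnP l (hln l hl)) hmem
    have hZLdisjZL : ∀ l ∈ Finset.Ico j r, ∀ l' ∈ Finset.Ico j r, l ≠ l' →
        Disjoint (ZL l) (ZL l') := by
      intro l hl l' hl' hnell
      refine Finset.disjoint_of_subset_left (hZLsub l (hln l hl))
        (Finset.disjoint_of_subset_right (hZLsub l' (hln l' hl')) ?_)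
      have hTll' : T l ≠ T l' := by
        rw [Finset.mem_Ico] at hl hl'
        exact hTne l l' hl.1 hl.2 hl'.1 hl'.2 hnell
      rw [Finset.disjoint_union_left]
      constructor
      · rw [Finset.disjoint_union_right]
        refine ⟨hXdisj _ _ hTll', ?_⟩
        simp only [Finset.disjoint_singleton_right]
        exact fun hmem => Finset.disjoint_left.1 (hPdisj (T l)) (hqnP l' (hln l' hl')) hmem
      · rw [Finset.disjoint_union_right]
        constructor
        · simp only [Finset.disjoint_singleton_left]
          exact fun hmem => Finset.disjoint_left.1 (hPdisj (T l')) (hqnP l (hln l hl)) hmem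
        · simp only [Finset.disjoint_singleton_left, Finset.mem_singleton]
          exact fun heq => hnell (hqninj l l' (hln l hl) (hln l' hl') heq)
    have hX'disj : ∀ w w', w ≠ w' → Disjoint (X' w) (X' w') := by
      intro w w' hne
      by_cases hw : w ∈ RA <;> by_cases hw' : w' ∈ RA
      · obtain ⟨l, hl, hlw⟩ := hRAmem w hw
        obtain ⟨l', hl', hlw'⟩ := hRAmem w' hw'
        rw [← hlw, ← hlw', hX'for l hl, hX'for l' hl']
        refine hZLdisjZL l hl l' hl' (fun h => hne ?_)
        rw [← hlw, ← hlw', h]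
      · obtain ⟨l, hl, hlw⟩ := hRAmem w hw
        rw [← hlw, hX'for l hl, hX'keep w' hw']
        exact hZLdisjX l hl w' hw'
      · obtain ⟨l', hl', hlw'⟩ := hRAmem w' hw'
        rw [hX'keep w hw, ← hlw', hX'for l' hl']
        exact (hZLdisjX l' hl' w hw).symm
      · rw [hX'keep w hw, hX'keep w' hw']
        exact hXdisj w w' hne
    have hX'efx : ∀ i w : Fin n, ∀ h ∈ X' w, v i (X' w \ {h}) ≤ v i (X' i) := by
      intro i w h hh
      refine le_trans ?_ (hX'own i)
      by_cases hw : w ∈ RA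
      · obtain ⟨l, hl, hlw⟩ := hRAmem w hw
        rw [← hlw, hX'for l hl] at hh ⊢
        exact hZLtight l (hln l hl) i h hh
      · rw [hX'keep w hw] at hh ⊢
        exact hXefx i w h hh
    have hX'rich : ∀ i (hne : (Y i).Nonempty), σ < v i {bg i hne} → v i {bg i hne} ≤ v i (X' i) :=
      fun i hne hσ => le_trans (hXrich i hne hσ) (hX'own i)
    have hX'mem : X' ∈ cand := (hmem_cand X').2 ⟨⟨hX'sub, hX'disj⟩, hX'efx, hX'rich⟩
    have hgain : Φ X < Φ X' := by
      rw [hΦ]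
      refine Finset.sum_lt_sum (fun i _ => hX'own i) ⟨T (j+1), Finset.mem_univ _, ?_⟩
      have hjmem : j ∈ Finset.Ico j r := Finset.mem_Ico.2 ⟨le_refl j, hjr⟩
      rw [hX'for j hjmem]
      exact hZLenvy j (hln j hjmem)
    exact absurd (hΦmax X' hX'mem) (not_le.2 hgain)
  -- Fact 3 : egalitarian guarantee
  have fact3 : ∀ i, (W Y) ≤ (4 * (n:ℝ) + 2) * v i (X i) := by
    intro i
    have hτ0 : 0 ≤ v i (X i) := hv0 i (X i)
    -- every single good of `Y i` is worth at most `v i (X i) + σ` to agent i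
    have hsingle : ∀ g ∈ Y i, v i {g} ≤ v i (X i) + σ := by
      intro g hg
      have hne : (Y i).Nonempty := ⟨g, hg⟩
      have hle : v i {g} ≤ v i {bg i hne} := hbg_max i hne g hg
      by_cases hσi : σ < v i {bg i hne}
      · exact hle.trans ((hXrich i hne hσi).trans (by linarith))
      · push_neg at hσi
        exact hle.trans (hσi.trans (by linarith))
    -- part bounds
    have hparts : ∀ j : Fin n, v i (Y i ∩ X j) ≤ 2 * v i (X i) + σ := by
      intro j
      rcases Nat.lt_or_ge (X j).card 2 with h2 | h2
      · have h2' : (X j).card = 0 ∨ (X j).card = 1 := by omega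
        rcases h2' with h0 | h1
        · rw [Finset.card_eq_zero] at h0
          rw [h0, Finset.inter_empty, hnorm i]
          linarith
        · obtain ⟨g, hXj⟩ := Finset.card_eq_one.1 h1
          by_cases hgY : g ∈ Y i
          · have hsub1 : Y i ∩ X j ⊆ {g} := by rw [hXj]; exact Finset.inter_subset_right
            have := (hmono i _ _ hsub1).trans (hsingle g hgY)
            linarith
          · have hsub1 : Y i ∩ X j = ∅ := by
              rw [hXj]
              refine Finset.eq_empty_of_forall_notMem (fun a ha => ?_)
              rw [Finset.mem_inter, Finset.mem_singleton] at ha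
              exact hgY (ha.2 ▸ ha.1)
            rw [hsub1, hnorm i]
            linarith
      · obtain ⟨a, ha, b, hb, hab⟩ := Finset.one_lt_card.1 h2
        by_cases hss : Y i ∩ X j = X j
        · rw [hss]
          have hXjeq : (X j \ {a}) ∪ {a} = X j := by
            rw [Finset.sdiff_union_self_eq_union]
            exact Finset.union_eq_left.2 (by simpa using ha)
          have h1 : v i (X j) ≤ v i (X j \ {a}) + v i {a} := by
            calc v i (X j) = v i ((X j \ {a}) ∪ {a}) := by rw [hXjeq]
              _ ≤ _ := hsub i _ _
          have h2a : v i (X j \ {a}) ≤ v i (X i) := hXefx i j a ha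
          have h3 : v i {a} ≤ v i (X j \ {b}) := by
            refine hmono i _ _ (Finset.singleton_subset_iff.2 ?_)
            rw [Finset.mem_sdiff, Finset.mem_singleton]
            exact ⟨ha, hab⟩
          have h4 : v i (X j \ {b}) ≤ v i (X i) := hXefx i j b hb
          linarith
        · have hss' : Y i ∩ X j ⊂ X j :=
            ssubset_of_subset_of_ne Finset.inter_subset_right hss
          obtain ⟨h, hhX, hhY⟩ := Finset.exists_of_ssubset hss'
          have hsub2 : Y i ∩ X j ⊆ X j \ {h} := by
            intro a haa
            rw [Finset.mem_sdiff, Finset.mem_singleton]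
            refine ⟨(Finset.mem_inter.1 haa).2, fun hah => ?_⟩
            exact hhY (hah ▸ haa)
          have := (hmono i _ _ hsub2).trans (hXefx i j h hhX)
          linarith
    -- decomposition
    have hcover : Y i ⊆ (Y i ∩ P) ∪ Finset.univ.biUnion (fun j => Y i ∩ X j) := by
      intro g hg
      by_cases hgb : g ∈ Finset.univ.biUnion X
      · obtain ⟨j, _, hgj⟩ := Finset.mem_biUnion.1 hgb
        exact Finset.mem_union_right _
          (Finset.mem_biUnion.2 ⟨j, Finset.mem_univ j, Finset.mem_inter.2 ⟨hg, hgj⟩⟩)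
      · refine Finset.mem_union_left _ (Finset.mem_inter.2 ⟨hg, ?_⟩)
        rw [hPdef, Finset.mem_sdiff]
        exact ⟨hYsub i hg, hgb⟩
    have hdecomp : v i (Y i) ≤ v i (Y i ∩ P) + ∑ j : Fin n, v i (Y i ∩ X j) := by
      have hb := val_biUnion_le (v i) (hnorm i) (hsub i) Finset.univ (fun j => Y i ∩ X j)
      calc v i (Y i) ≤ v i ((Y i ∩ P) ∪ Finset.univ.biUnion (fun j => Y i ∩ X j)) :=
            hmono i _ _ hcover
        _ ≤ v i (Y i ∩ P) + v i (Finset.univ.biUnion (fun j => Y i ∩ X j)) := hsub i _ _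
        _ ≤ _ := by linarith
    have hPbound : v i (Y i ∩ P) ≤ v i (X i) := fact1 i _ Finset.inter_subset_right
    have hsum : ∑ j : Fin n, v i (Y i ∩ X j) ≤ (n : ℝ) * (2 * v i (X i) + σ) := by
      calc ∑ j : Fin n, v i (Y i ∩ X j) ≤ ∑ _j : Fin n, (2 * v i (X i) + σ) :=
            Finset.sum_le_sum (fun j _ => hparts j)
        _ = (n : ℝ) * (2 * v i (X i) + σ) := by
            rw [Finset.sum_const, Finset.card_univ, Fintype.card_fin, nsmul_eq_mul]
    have hn' : (0:ℝ) < n := by exact_mod_cast hn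
    have hnσ : (n : ℝ) * σ = (W Y) / 2 := by
      rw [hσdef]
      field_simp
    have := hOPT_le i
    nlinarith [hτ0]
  refine ⟨X, hXsub, hXdisj, ?_, fact2, fun i => fact1 i P (le_refl _), ?_⟩
  · intro i j g hg
    have h1 : v i (X j \ {g}) ≤ v i (X i) := hXefx i j g hg
    nlinarith [hv0 i (X j \ {g})]
  · intro Xs hXs1 hXs2
    have hXsmem : Xs ∈ cand0 := (hmem_cand0 Xs).2 ⟨hXs1, hXs2⟩
    have hWle : W Xs ≤ W Y := hYmax Xs hXsmem
    have hWXs0 : 0 ≤ W Xs := Finset.le_inf' hune _ (fun i _ => hv0 i (Xs i))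
    refine Finset.le_inf' hune _ (fun i _ => ?_)
    have h3 := fact3 i
    have hv0' := hv0 i (X i)
    have hcoeff : (0:ℝ) < 4 * ((n:ℝ) + 1) := by positivity
    rw [div_mul_eq_mul_div, div_le_iff₀ hcoeff]
    nlinarith [hWle, hWXs0, h3, hv0', hn']
end

section
/- (Main theorem, complete allocation, p ∈ (0,1].) Fix a real p with 0 < p ≤ 1. For every ε with 0 < ε < 1/2 there exists a complete allocation X = (X_1,…,X_n) of M that is (1/2 − ε)-EFX and satisfies, for every allocation X* = (X*_1,…,X*_n) of pairwise disjoint subsets of M, Σ_i v_i(X_i)^p ≥ ( (1 − 2ε)/(8(n+1)) )^p · Σ_i v_i(X*_i)^p (equivalently, the p-mean welfare ( (1/n) Σ_i v_i(X_i)^p )^{1/p} of X is at least (1 − 2ε)/(8(n+1)) times that of X*). -/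
/-!
Among the complete 1/2-EFX allocations, which are nonempty and finite in number, take one
maximizing `∑ i, v i (X i) ^ p`. It is (1/2 - ε)-EFX, and to compare it with an allocation `X*`
it suffices to exhibit some complete 1/2-EFX allocation giving every agent `a` at least
`c * v a (X* a)`, with `c = (1 - 2ε)/(8(n+1))`.

A partial 1/2-EFX allocation extends to a complete one that is no worse for anybody: take one
that is lexicographically maximal in (total value, number of allocated goods); an unallocated
good would always allow an improvement. In a complete 1/2-EFX allocation `X`, a bundle with two
goods is worth at most `4 v a (X a)` to agent `a`, so if `a` gets less than `c * v a (X* a)`,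
subadditivity over the bundles forces some single good of `X* a` to be worth at least that much
to `a`. Seeding the completion with such singletons, one unsatisfied agent at a time, ends with
every agent satisfied.
-/

open Finset Function

theorem Function.periodicPts_nonempty {α : Type*} [Finite α] [Nonempty α] (f : α → α) :
    (periodicPts f).Nonempty := by
  obtain ⟨x⟩ := ‹Nonempty α›
  obtain ⟨m, n, hmn, heq⟩ := Finite.exists_ne_map_eq_of_infinite fun k : ℕ => f^[k] x
  wlog hlt : m < n generalizing m n
  · exact this n m hmn.symm heq.symm (hmn.lt_or_gt.resolve_left hlt)
  refine ⟨f^[m] x, mk_mem_periodicPts (Nat.sub_pos_of_lt hlt) ?_⟩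
  rw [IsPeriodicPt, IsFixedPt, ← iterate_add_apply, Nat.sub_add_cancel hlt.le]
  exact heq.symm

theorem Function.exists_perm_apply_eq_of_apply_ne {α : Type*} [Finite α] [Nonempty α]
    (f : α → α) (hf : ∀ x, f x ≠ x) :
    ∃ σ : Equiv.Perm α, (∃ x, σ x ≠ x) ∧ ∀ x, σ x ≠ x → f (σ x) = x := by
  classical
  let σ : Equiv.Perm α := Equiv.Perm.ofSubtype ((bijOn_periodicPts f).equiv f).symm
  have hσ : ∀ x ∈ periodicPts f, f (σ x) = x := fun x hx => by
    rw [Equiv.Perm.ofSubtype_apply_of_mem _ hx]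
    exact congrArg Subtype.val (((bijOn_periodicPts f).equiv f).apply_symm_apply ⟨x, hx⟩)
  obtain ⟨x₀, hx₀⟩ := periodicPts_nonempty f
  refine ⟨σ, ⟨x₀, fun h => hf x₀ (by simpa [h] using hσ x₀ hx₀)⟩, fun x hx => ?_⟩
  by_cases hp : x ∈ periodicPts f
  · exact hσ x hp
  · exact absurd (Equiv.Perm.ofSubtype_apply_of_not_mem _ hp) hx

theorem Real.mul_rpow_one_div_le {c A B t p : ℝ} (hc : 0 ≤ c) (hp : 0 < p) (hA : 0 ≤ A)
    (ht : 0 ≤ t) (h : c ^ p * A ≤ B) : c * (t * A) ^ (1 / p) ≤ (t * B) ^ (1 / p) := by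
  have hcp : 0 ≤ c ^ p := rpow_nonneg hc p
  calc c * (t * A) ^ (1 / p) = (c ^ p * (t * A)) ^ (1 / p) := by
        rw [mul_rpow hcp (by positivity), one_div, rpow_rpow_inv hc hp.ne']
    _ ≤ (t * B) ^ (1 / p) := by
        rw [mul_left_comm]
        gcongr

theorem Real.rpow_mul_sum_rpow_le {ι : Type*} {s : Finset ι} {a b : ι → ℝ} {c p : ℝ}
    (hc : 0 ≤ c) (hp : 0 ≤ p) (ha : ∀ i ∈ s, 0 ≤ a i) (h : ∀ i ∈ s, c * a i ≤ b i) :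
    c ^ p * ∑ i ∈ s, a i ^ p ≤ ∑ i ∈ s, b i ^ p := by
  rw [mul_sum]
  refine sum_le_sum fun i hi => ?_
  rw [← mul_rpow hc (ha i hi)]
  exact rpow_le_rpow (mul_nonneg hc (ha i hi)) (h i hi) hp

section Allocation

variable {G ι : Type*}

structure IsAllocation (M : Finset G) (X : ι → Finset G) : Prop where
  subset (i : ι) : X i ⊆ M
  pairwise_disjoint : Pairwise (Disjoint on X)

variable {M : Finset G} {X : ι → Finset G}

namespace IsAllocation

theorem mono {Y : ι → Finset G} (hY : IsAllocation M Y) (h : ∀ i, X i ⊆ Y i) :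
    IsAllocation M X :=
  ⟨fun i => (h i).trans (hY.subset i),
    fun i j hij => (hY.pairwise_disjoint hij).mono (h i) (h j)⟩

theorem update [DecidableEq ι] (hX : IsAllocation M X) {k : ι} {B : Finset G} (hB : B ⊆ M)
    (hdisj : ∀ j ≠ k, Disjoint B (X j)) : IsAllocation M (update X k B) := by
  refine ⟨fun i => ?_, fun i j hij => ?_⟩
  · rcases eq_or_ne i k with rfl | hi
    · simpa
    · simpa [hi] using hX.subset i
  · simp only [onFun]
    rcases eq_or_ne i k with rfl | hi
    · rw [update_self, update_of_ne hij.symm]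
      exact hdisj j hij.symm
    rcases eq_or_ne j k with rfl | hj
    · rw [update_self, update_of_ne hi]
      exact (hdisj i hi).symm
    · rw [update_of_ne hi, update_of_ne hj]
      exact hX.pairwise_disjoint hij

theorem comp_perm (hX : IsAllocation M X) (σ : Equiv.Perm ι) : IsAllocation M (X ∘ σ) :=
  ⟨fun i => hX.subset (σ i), fun _ _ hij => hX.pairwise_disjoint (σ.injective.ne hij)⟩

end IsAllocation

theorem finite_setOf_isAllocation [Finite ι] (M : Finset G) :
    {X : ι → Finset G | IsAllocation M X}.Finite :=
  (Set.Finite.pi' fun _ => M.powerset.finite_toSet).subset fun X hX i => by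
    simpa using hX.subset i

theorem apply_le_apply_update [DecidableEq ι] {v : ι → Finset G → ℝ} {k : ι} {B : Finset G}
    (h : v k (X k) ≤ v k B) (i : ι) : v i (X i) ≤ v i (update X k B i) := by
  rcases eq_or_ne i k with rfl | hi
  · simpa
  · simp [hi]

end Allocation

section

variable {G : Type*} [DecidableEq G]

structure IsSubadditiveValuation_s17 (f : Finset G → ℝ) : Prop where
  map_empty : f ∅ = 0
  mono : Monotone f
  map_union_le (A B : Finset G) : f (A ∪ B) ≤ f A + f B

namespace IsSubadditiveValuation_s17

variable {f : Finset G → ℝ}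

theorem nonneg_s17 (hf : IsSubadditiveValuation_s17 f) (A : Finset G) : 0 ≤ f A :=
  hf.map_empty ▸ hf.mono (empty_subset A)

theorem le_add_of_subset_union (hf : IsSubadditiveValuation_s17 f) {A B C : Finset G}
    (h : A ⊆ B ∪ C) : f A ≤ f B + f C :=
  (hf.mono h).trans (hf.map_union_le B C)

theorem map_biUnion_le {ι : Type*} (hf : IsSubadditiveValuation_s17 f) (s : Finset ι)
    (X : ι → Finset G) : f (s.biUnion X) ≤ ∑ j ∈ s, f (X j) := by
  classical
  induction s using Finset.induction_on with
  | empty => simp [hf.map_empty]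
  | insert j s hj ih =>
    rw [biUnion_insert, sum_insert hj]
    exact (hf.map_union_le _ _).trans (by gcongr)

end IsSubadditiveValuation_s17

variable {ι : Type*} {M : Finset G} {v : ι → Finset G → ℝ} {X : ι → Finset G}

def IsHalfEFX (v : ι → Finset G → ℝ) (X : ι → Finset G) : Prop :=
  ∀ i j, ∀ g ∈ X j, v i (X j \ {g}) ≤ 2 * v i (X i)

namespace IsHalfEFX

theorem of_card_le_one (hv : ∀ i, IsSubadditiveValuation_s17 (v i)) (hX : ∀ j, #(X j) ≤ 1) :
    IsHalfEFX v X := by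
  intro i j g hg
  have hempty : X j \ {g} = ∅ := by
    ext h
    simpa using fun hh => card_le_one.1 (hX j) h hh g hg
  rw [hempty, (hv i).map_empty]
  exact mul_nonneg zero_le_two ((hv i).nonneg_s17 _)

theorem update [DecidableEq ι] (hX : IsHalfEFX v X) {k : ι} {B : Finset G}
    (hle : ∀ i, v i (X i) ≤ v i (update X k B i))
    (hB : ∀ i, ∀ g ∈ B, v i (B \ {g}) ≤ 2 * v i (update X k B i)) :
    IsHalfEFX v (update X k B) := by
  intro i j g hg
  rcases eq_or_ne j k with rfl | hj
  · rw [update_self] at hg ⊢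
    exact hB i g hg
  · rw [update_of_ne hj] at hg ⊢
    linarith [hX i j g hg, hle i]

theorem comp_perm (hX : IsHalfEFX v X) (σ : Equiv.Perm ι)
    (hle : ∀ i, v i (X i) ≤ v i (X (σ i))) : IsHalfEFX v (X ∘ σ) :=
  fun i j g hg => (hX i (σ j) g hg).trans (by simpa using hle i)

theorem apply_le_four_mul (hv : ∀ i, IsSubadditiveValuation_s17 (v i)) (hX : IsHalfEFX v X)
    (i : ι) {j : ι} {g h : G} (hg : g ∈ X j) (hh : h ∈ X j) (hgh : g ≠ h) :
    v i (X j) ≤ 4 * v i (X i) := by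
  have hcover : X j ⊆ (X j \ {g}) ∪ (X j \ {h}) := fun x hx => by
    by_cases hxg : x = g
    · subst hxg
      exact mem_union_right _ (by simp [hx, hgh])
    · exact mem_union_left _ (by simp [hx, hxg])
  linarith [(hv i).le_add_of_subset_union hcover, hX i j g hg, hX i j h hh]

theorem apply_inter_le (hv : ∀ i, IsSubadditiveValuation_s17 (v i)) (hX : IsHalfEFX v X)
    (i j : ι) {S : Finset G} {t : ℝ} (ht : ∀ γ ∈ S, v i {γ} ≤ t) (ht0 : 0 ≤ t) :
    v i (S ∩ X j) ≤ 4 * v i (X i) + t := by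
  have h4 := mul_nonneg zero_le_four ((hv i).nonneg_s17 (X i))
  obtain hempty | ⟨γ, hγ⟩ := (S ∩ X j).eq_empty_or_nonempty
  · rw [hempty, (hv i).map_empty]
    linarith
  rw [mem_inter] at hγ
  by_cases hsingle : X j ⊆ {γ}
  · linarith [(hv i).mono (show S ∩ X j ⊆ {γ} from inter_subset_right.trans hsingle), ht γ hγ.1]
  · obtain ⟨h, hh, hhγ⟩ := not_subset.1 hsingle
    have := hX.apply_le_four_mul hv i hγ.2 hh (Ne.symm (by simpa using hhγ))
    linarith [(hv i).mono (show S ∩ X j ⊆ X j from inter_subset_right)]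

end IsHalfEFX

variable [Fintype ι]

def Improves (v : ι → Finset G → ℝ) (X Y : ι → Finset G) : Prop :=
  (∀ i, v i (X i) ≤ v i (Y i)) ∧
    ((∃ i, v i (X i) < v i (Y i)) ∨ univ.biUnion X ⊂ univ.biUnion Y)

theorem Improves.toLex_lt {Y : ι → Finset G} (h : Improves v X Y) :
    toLex (∑ i, v i (X i), #(univ.biUnion X)) < toLex (∑ i, v i (Y i), #(univ.biUnion Y)) := by
  obtain ⟨hle, hlt | hss⟩ := h
  · have hsum := sum_lt_sum (fun i _ => hle i) (hlt.imp fun i hi => ⟨mem_univ i, hi⟩)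
    exact Prod.Lex.toLex_lt_toLex'.2 ⟨hsum.le, fun h => absurd h hsum.ne⟩
  · exact Prod.Lex.toLex_lt_toLex'.2 ⟨sum_le_sum fun i _ => hle i, fun _ => card_lt_card hss⟩

namespace IsHalfEFX

theorem apply_le_card_mul (hv : ∀ i, IsSubadditiveValuation_s17 (v i)) (hX : IsHalfEFX v X)
    (i : ι) {S : Finset G} (hS : S ⊆ univ.biUnion X) {t : ℝ} (ht : ∀ γ ∈ S, v i {γ} ≤ t)
    (ht0 : 0 ≤ t) : v i S ≤ Fintype.card ι * (4 * v i (X i) + t) := by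
  calc v i S = v i (univ.biUnion fun j => S ∩ X j) := by
        rw [← inter_biUnion, inter_eq_left.2 hS]
    _ ≤ ∑ j, v i (S ∩ X j) := (hv i).map_biUnion_le _ _
    _ ≤ ∑ _j : ι, (4 * v i (X i) + t) := sum_le_sum fun j _ => hX.apply_inter_le hv i j ht ht0
    _ = Fintype.card ι * (4 * v i (X i) + t) := by rw [sum_const, card_univ, nsmul_eq_mul]

theorem exists_mem_le_apply_singleton (hv : ∀ i, IsSubadditiveValuation_s17 (v i))
    (hX : IsHalfEFX v X) {a : ι} {S : Finset G} (hS : S ⊆ univ.biUnion X) {c : ℝ}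
    (hc : 5 * Fintype.card ι * c ≤ 1) (hlt : v a (X a) < c * v a S) :
    ∃ γ ∈ S, c * v a S ≤ v a {γ} := by
  by_contra! hsmall
  have hu := (hv a).nonneg_s17 (X a)
  have hw := (hv a).nonneg_s17 S
  have hcw : 0 < c * v a S := hu.trans_lt hlt
  have hcard : (1 : ℝ) ≤ Fintype.card ι := by exact_mod_cast Fintype.card_pos_iff.2 ⟨a⟩
  have key := hX.apply_le_card_mul hv a hS (fun γ hγ => (hsmall γ hγ).le) hcw.le
  nlinarith

theorem exists_improves_of_lt_apply_singleton [DecidableEq ι]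
    (hv : ∀ i, IsSubadditiveValuation_s17 (v i)) (hX : IsAllocation M X) (hXe : IsHalfEFX v X)
    {g : G} (hgM : g ∈ M) (hg : ∀ j, g ∉ X j) {i : ι} (hi : v i (X i) < v i {g}) :
    ∃ Y, IsAllocation M Y ∧ IsHalfEFX v Y ∧ Improves v X Y := by
  have hle := apply_le_apply_update (X := X) hi.le
  refine ⟨Function.update X i {g},
    hX.update (singleton_subset_iff.2 hgM) fun j _ => disjoint_singleton_left.2 (hg j),
    hXe.update hle fun k g' hg' => ?_, hle, Or.inl ⟨i, by simpa using hi⟩⟩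
  rw [mem_singleton.1 hg', Finset.sdiff_self, (hv k).map_empty]
  exact mul_nonneg zero_le_two ((hv k).nonneg_s17 _)

theorem exists_improves_of_forall_apply_le [DecidableEq ι]
    (hv : ∀ i, IsSubadditiveValuation_s17 (v i)) (hX : IsAllocation M X) (hXe : IsHalfEFX v X)
    {g : G} (hgM : g ∈ M) (hg : ∀ j, g ∉ X j) (hgle : ∀ i, v i {g} ≤ v i (X i))
    {k : ι} (hk : ∀ i, v i (X k) ≤ v i (X i)) :
    ∃ Y, IsAllocation M Y ∧ IsHalfEFX v Y ∧ Improves v X Y := by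
  have hle := apply_le_apply_update (X := X) ((hv k).mono (subset_insert g (X k)))
  refine ⟨Function.update X k (insert g (X k)),
    hX.update (insert_subset hgM (hX.subset k))
      fun j hj => disjoint_insert_left.2 ⟨hg j, hX.pairwise_disjoint hj.symm⟩,
    hXe.update hle fun i g' _ => ?_, hle, Or.inr ?_⟩
  · have := (hv i).le_add_of_subset_union (A := insert g (X k) \ {g'}) (by
      rw [insert_eq]
      exact sdiff_subset)
    linarith [hk i, hgle i, hle i]
  · have hsub : univ.biUnion X ⊆ univ.biUnion (Function.update X k (insert g (X k))) :=
      biUnion_mono fun j _ => by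
        rcases eq_or_ne j k with rfl | hj
        · simp
        · simp [hj]
    rw [ssubset_iff_of_subset hsub]
    exact ⟨g, mem_biUnion.2 ⟨k, mem_univ k, by simp⟩, by simpa using hg⟩

theorem exists_improves_of_forall_exists_lt [Nonempty ι] (hX : IsAllocation M X)
    (hXe : IsHalfEFX v X) (henvied : ∀ k, ∃ i, v i (X i) < v i (X k)) :
    ∃ Y, IsAllocation M Y ∧ IsHalfEFX v Y ∧ Improves v X Y := by
  choose e he using henvied
  obtain ⟨σ, ⟨w, hw⟩, hσ⟩ :=
    exists_perm_apply_eq_of_apply_ne e fun k hk => (he k).ne (by rw [hk])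
  have hlt : ∀ i, σ i ≠ i → v i (X i) < v i (X (σ i)) := fun i hi => by
    simpa [hσ i hi] using he (σ i)
  have hle : ∀ i, v i (X i) ≤ v i (X (σ i)) := fun i => by
    by_cases hi : σ i = i
    · rw [hi]
    · exact (hlt i hi).le
  exact ⟨X ∘ σ, hX.comp_perm σ, hXe.comp_perm σ hle, hle, Or.inl ⟨w, hlt w hw⟩⟩

/-- An unallocated good can be given to an agent who prefers it to its bundle; otherwise to
an agent nobody envies; otherwise the envy graph has a cycle, along which bundles are
rotated. -/
theorem exists_improves [DecidableEq ι] [Nonempty ι] (hv : ∀ i, IsSubadditiveValuation_s17 (v i))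
    (hX : IsAllocation M X) (hXe : IsHalfEFX v X) {g : G} (hgM : g ∈ M) (hg : ∀ j, g ∉ X j) :
    ∃ Y, IsAllocation M Y ∧ IsHalfEFX v Y ∧ Improves v X Y := by
  by_cases hsteal : ∃ i, v i (X i) < v i {g}
  · obtain ⟨i, hi⟩ := hsteal
    exact hXe.exists_improves_of_lt_apply_singleton hv hX hgM hg hi
  push Not at hsteal
  by_cases hunenvied : ∃ k, ∀ i, v i (X k) ≤ v i (X i)
  · obtain ⟨k, hk⟩ := hunenvied
    exact hXe.exists_improves_of_forall_apply_le hv hX hgM hg hsteal hk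
  push Not at hunenvied
  exact hXe.exists_improves_of_forall_exists_lt hX hunenvied

end IsHalfEFX

theorem exists_complete_isHalfEFX_of_le [DecidableEq ι] [Nonempty ι]
    (hv : ∀ i, IsSubadditiveValuation_s17 (v i)) {X₀ : ι → Finset G} (hX₀ : IsAllocation M X₀)
    (hX₀e : IsHalfEFX v X₀) :
    ∃ X, IsAllocation M X ∧ IsHalfEFX v X ∧ univ.biUnion X = M ∧
      ∀ i, v i (X₀ i) ≤ v i (X i) := by
  obtain ⟨X, ⟨hX, hXe, hX₀X⟩, hmax⟩ := Set.exists_max_image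
    {X | IsAllocation M X ∧ IsHalfEFX v X ∧ ∀ i, v i (X₀ i) ≤ v i (X i)}
    (fun X => toLex (∑ i, v i (X i), #(univ.biUnion X)))
    ((finite_setOf_isAllocation M).subset fun X hX => hX.1) ⟨X₀, hX₀, hX₀e, fun _ => le_rfl⟩
  refine ⟨X, hX, hXe, ?_, hX₀X⟩
  by_contra hne
  obtain ⟨g, hgM, hg⟩ :=
    exists_of_ssubset ((biUnion_subset.2 fun i _ => hX.subset i).ssubset_of_ne hne)
  obtain ⟨Y, hY, hYe, hXY⟩ := hXe.exists_improves hv hX hgM (by simpa using hg)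
  exact (hmax Y ⟨hY, hYe, fun i => (hX₀X i).trans (hXY.1 i)⟩).not_gt hXY.toLex_lt

theorem exists_complete_isHalfEFX_mul_le [DecidableEq ι] [Nonempty ι]
    (hv : ∀ i, IsSubadditiveValuation_s17 (v i)) {Xs : ι → Finset G} (hXs : IsAllocation M Xs)
    {c : ℝ} (hc : 5 * Fintype.card ι * c ≤ 1) :
    ∃ X, IsAllocation M X ∧ IsHalfEFX v X ∧ univ.biUnion X = M ∧
      ∀ a, c * v a (Xs a) ≤ v a (X a) := by
  suffices ∀ B : Finset ι, ∀ X₀ : ι → Finset G, (∀ a, X₀ a ⊆ Xs a ∧ #(X₀ a) ≤ 1) →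
      (∀ a ∉ B, c * v a (Xs a) ≤ v a (X₀ a)) → ∃ X, IsAllocation M X ∧ IsHalfEFX v X ∧
        univ.biUnion X = M ∧ ∀ a, c * v a (Xs a) ≤ v a (X a) from
    this univ (fun _ => ∅) (fun _ => ⟨empty_subset _, by simp⟩) (by simp)
  intro B
  induction B using Finset.strongInduction with
  | H B ih =>
  intro X₀ hX₀ hB
  obtain ⟨X, hX, hXe, hXc, hX₀X⟩ := exists_complete_isHalfEFX_of_le hv
    (hXs.mono fun a => (hX₀ a).1) (IsHalfEFX.of_card_le_one hv fun a => (hX₀ a).2)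
  by_cases hgood : ∀ a, c * v a (Xs a) ≤ v a (X a)
  · exact ⟨X, hX, hXe, hXc, hgood⟩
  push Not at hgood
  obtain ⟨a, ha⟩ := hgood
  have haB : a ∈ B := by
    by_contra h
    linarith [hB a h, hX₀X a]
  obtain ⟨γ, hγ, hγv⟩ := hXe.exists_mem_le_apply_singleton hv (hXc ▸ hXs.subset a) hc ha
  refine ih _ (erase_ssubset haB) (update X₀ a {γ}) (fun b => ?_) (fun b hb => ?_)
  · rcases eq_or_ne b a with rfl | hba
    · simpa using hγ
    · simpa [hba] using hX₀ b
  · rcases eq_or_ne b a with rfl | hba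
    · simpa using hγv
    · simpa [hba] using hB b fun h => hb (mem_erase.2 ⟨hba, h⟩)

end

theorem main_complete_pos_p_general
    {G : Type*} [DecidableEq G]
    (n : ℕ) (hn : 0 < n) (M : Finset G)
    (v : Fin n → Finset G → ℝ)
    (hnorm : ∀ i, v i ∅ = 0)
    (hmono : ∀ i A B, A ⊆ B → v i A ≤ v i B)
    (hsub : ∀ i A B, v i (A ∪ B) ≤ v i A + v i B)
    (p : ℝ) (hp0 : 0 < p)
    (ε : ℝ) (hε0 : 0 < ε) (hε1 : ε < 1 / 2) :
    ∃ X : Fin n → Finset G,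
      (∀ i, X i ⊆ M) ∧
      (∀ i j, i ≠ j → Disjoint (X i) (X j)) ∧
      (Finset.univ.biUnion X = M) ∧
      (∀ i j, ∀ g ∈ X j, (1 / 2 - ε) * v i (X j \ {g}) ≤ v i (X i)) ∧
      (∀ Xs : Fin n → Finset G, (∀ i, Xs i ⊆ M) →
        (∀ i j, i ≠ j → Disjoint (Xs i) (Xs j)) →
        ((1 - 2 * ε) / (8 * ((n : ℝ) + 1))) ^ p * ∑ i, v i (Xs i) ^ p
            ≤ ∑ i, v i (X i) ^ p
        ∧ ((1 - 2 * ε) / (8 * ((n : ℝ) + 1))) *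
              (((1 : ℝ) / n) * ∑ i, v i (Xs i) ^ p) ^ (1 / p)
            ≤ (((1 : ℝ) / n) * ∑ i, v i (X i) ^ p) ^ (1 / p)) := by
  have hv : ∀ i, IsSubadditiveValuation_s17 (v i) := fun i => ⟨hnorm i, hmono i, hsub i⟩
  have : Nonempty (Fin n) := ⟨⟨0, hn⟩⟩
  set c := (1 - 2 * ε) / (8 * ((n : ℝ) + 1))
  have hc0 : 0 ≤ c := div_nonneg (by linarith) (by positivity)
  have hc : 5 * Fintype.card (Fin n) * c ≤ 1 := by
    rw [Fintype.card_fin, ← mul_div_assoc, div_le_one (by positivity)]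
    nlinarith
  obtain ⟨X₀, hX₀, hX₀e, hX₀c, -⟩ := exists_complete_isHalfEFX_of_le hv (X₀ := fun _ => ∅)
    ⟨fun _ => empty_subset M, fun _ _ _ => disjoint_empty_left _⟩
    (IsHalfEFX.of_card_le_one hv fun _ => by simp)
  obtain ⟨X, ⟨hX, hXe, hXc⟩, hmax⟩ := Set.exists_max_image
    {X | IsAllocation M X ∧ IsHalfEFX v X ∧ univ.biUnion X = M} (fun X => ∑ i, v i (X i) ^ p)
    ((finite_setOf_isAllocation M).subset fun X hX => hX.1) ⟨X₀, hX₀, hX₀e, hX₀c⟩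
  refine ⟨X, hX.subset, fun i j => @hX.pairwise_disjoint i j, hXc,
    fun i j g hg => by nlinarith [hXe i j g hg, (hv i).nonneg_s17 (X j \ {g})],
    fun Xs hXsM hXsd => ?_⟩
  obtain ⟨Y, hY, hYe, hYc, hXsY⟩ :=
    exists_complete_isHalfEFX_mul_le hv ⟨hXsM, fun i j => hXsd i j⟩ hc
  have hwelfare : c ^ p * ∑ i, v i (Xs i) ^ p ≤ ∑ i, v i (X i) ^ p :=
    (Real.rpow_mul_sum_rpow_le hc0 hp0.le (fun i _ => (hv i).nonneg_s17 _) fun i _ => hXsY i).trans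
      (hmax Y ⟨hY, hYe, hYc⟩)
  exact ⟨hwelfare, Real.mul_rpow_one_div_le hc0 hp0
    (sum_nonneg fun i _ => Real.rpow_nonneg ((hv i).nonneg_s17 _) p) (by positivity) hwelfare⟩

/-- STATEMENT 17 (Main theorem, complete allocation, `p ∈ (0,1]`): For every
`ε ∈ (0, 1/2)` there is a complete `(1/2 - ε)`-EFX allocation `X` such that
for every allocation `X*`, `Σ_i v i (X i)^p ≥ ((1-2ε)/(8(n+1)))^p · Σ_i v i (X* i)^p`,
equivalently its `p`-mean welfare is at least `(1-2ε)/(8(n+1))` times that of `X*`. -/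
theorem main_complete_pos_p
    {G : Type*} [DecidableEq G]
    (n : ℕ) (hn : 0 < n) (M : Finset G) (hm : n ≤ M.card)
    (v : Fin n → Finset G → ℝ)
    (hv0 : ∀ i A, 0 ≤ v i A)
    (hnorm : ∀ i, v i ∅ = 0)
    (hmono : ∀ i A B, A ⊆ B → v i A ≤ v i B)
    (hsub : ∀ i A B, v i (A ∪ B) ≤ v i A + v i B)
    (p : ℝ) (hp0 : 0 < p) (hp1 : p ≤ 1)
    (ε : ℝ) (hε0 : 0 < ε) (hε1 : ε < 1 / 2) :
    ∃ X : Fin n → Finset G,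
      (∀ i, X i ⊆ M) ∧
      (∀ i j, i ≠ j → Disjoint (X i) (X j)) ∧
      (Finset.univ.biUnion X = M) ∧
      (∀ i j, ∀ g ∈ X j, (1 / 2 - ε) * v i (X j \ {g}) ≤ v i (X i)) ∧
      (∀ Xs : Fin n → Finset G, (∀ i, Xs i ⊆ M) →
        (∀ i j, i ≠ j → Disjoint (Xs i) (Xs j)) →
        ((1 - 2 * ε) / (8 * ((n : ℝ) + 1))) ^ p * ∑ i, v i (Xs i) ^ p
            ≤ ∑ i, v i (X i) ^ p
        ∧ ((1 - 2 * ε) / (8 * ((n : ℝ) + 1))) *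
              (((1 : ℝ) / n) * ∑ i, v i (Xs i) ^ p) ^ (1 / p)
            ≤ (((1 : ℝ) / n) * ∑ i, v i (X i) ^ p) ^ (1 / p)) :=
  main_complete_pos_p_general n hn M v hnorm hmono hsub p hp0 ε hε0 hε1
end
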